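/- arXiv:1410.8179 — 5 statements merged into one kernel-verified Lean document; each statement's English description precedes it below -/
import Mathlib

section
/- Let σ ∈ ℝ be fixed. Let (r_j) be a sequence of positive reals tending to +∞, let (ω_j) be positive reals with ω_j → 0, and let (r'_j), (r''_j) be sequences of reals satisfying |r'_j − r_j| < ω_j and |r''_j − r_j| < ω_j for all j. Then |Γ(σ + i r'_j)| / |Γ(σ + i r''_j)| → 1 as j → ∞. -/
/-!
By Euler's limit formula `Γ(s) = lim n^s n! / ∏_{k ≤ n} (s + k)`, for `z = σ + i t₁` and
`w = σ + i t₂` the ratio `|Γ(z)| / |Γ(w)|` is the limit of the products `∏_k |w + k| / |z + k|`.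
The factors share their real part, so `|w + k|² - |z + k|² = t₂² - t₁²` for every `k`, and each
factor is at most `exp ((t₂² - t₁²) / (2 |z + k|²))`. As `∑_k |z + k|⁻² = O(1 / t₁)`, the
ratio lies within `exp (± O(|t₂² - t₁²| / t₁))`, which is `exp (± O(ω))` when `t₁` and `t₂` are
within `ω` of `r`.
-/

open Complex Filter Topology Finset

lemma div_le_exp_sq_sub_sq_div {a b : ℝ} (ha : 0 ≤ a) (hb : 0 < b) :
    a / b ≤ Real.exp ((a ^ 2 - b ^ 2) / (2 * b ^ 2)) := by
  have hsq : (a / b) ^ 2 ≤ Real.exp ((a ^ 2 - b ^ 2) / (2 * b ^ 2)) ^ 2 := by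
    calc (a / b) ^ 2 = (a ^ 2 - b ^ 2) / b ^ 2 + 1 := by field_simp; ring
      _ ≤ Real.exp ((a ^ 2 - b ^ 2) / b ^ 2) := Real.add_one_le_exp _
      _ = Real.exp ((a ^ 2 - b ^ 2) / (2 * b ^ 2)) ^ 2 := by
        rw [← Real.exp_nat_mul]; congr 1; field_simp; ring
  exact (pow_le_pow_iff_left₀ (by positivity) (Real.exp_pos _).le two_ne_zero).mp hsq

lemma sum_range_inv_add_sq_le {u : ℝ} (hu : 1 ≤ u) (N : ℕ) :
    ∑ k ∈ range N, 1 / ((k : ℝ) + u) ^ 2 ≤ 2 / u := by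
  have hterm : ∀ k ∈ range N,
      1 / ((k : ℝ) + u) ^ 2 ≤ 2 * (1 / ((k : ℝ) + u) - 1 / (((k + 1 : ℕ) : ℝ) + u)) := by
    intro k _
    have hk : 1 ≤ (k : ℝ) + u := by linarith [k.cast_nonneg (α := ℝ)]
    rw [Nat.cast_succ, div_sub_div _ _ (by positivity) (by positivity), ← mul_div_assoc,
      div_le_div_iff₀ (by positivity) (by positivity)]
    nlinarith
  calc ∑ k ∈ range N, 1 / ((k : ℝ) + u) ^ 2
      ≤ ∑ k ∈ range N, 2 * (1 / ((k : ℝ) + u) - 1 / (((k + 1 : ℕ) : ℝ) + u)) := sum_le_sum hterm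
    _ = 2 * (1 / u - 1 / ((N : ℝ) + u)) := by
      rw [← mul_sum, sum_range_sub' (fun k : ℕ ↦ 1 / ((k : ℝ) + u)), Nat.cast_zero, zero_add]
    _ ≤ 2 / u := by
      have : 0 ≤ 1 / ((N : ℝ) + u) := by positivity
      rw [mul_sub, mul_one_div]; linarith

lemma sq_norm_add_natCast (s : ℂ) (k : ℕ) : ‖s + k‖ ^ 2 = (s.re + k) ^ 2 + s.im ^ 2 := by
  rw [Complex.sq_norm, normSq_apply]
  simp only [add_re, natCast_re, add_im, natCast_im, add_zero]
  ring

lemma sum_range_inv_sq_norm_add_natCast_le {s : ℂ} (hs : |s.re| + 1 ≤ s.im) (N : ℕ) :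
    ∑ k ∈ range N, 1 / ‖s + k‖ ^ 2 ≤ 4 / (s.im - |s.re|) := by
  set u := s.im - |s.re|
  have hterm : ∀ k ∈ range N, 1 / ‖s + k‖ ^ 2 ≤ 2 * (1 / ((k : ℝ) + u) ^ 2) := by
    intro k _
    have hk : 1 ≤ (k : ℝ) + u := by linarith [k.cast_nonneg (α := ℝ)]
    have hre : (k : ℝ) - |s.re| ≤ |s.re + k| := by
      linarith [neg_abs_le s.re, le_abs_self (s.re + k)]
    have hsum : ((k : ℝ) + u) ^ 2 ≤ 2 * ‖s + k‖ ^ 2 := by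
      rw [sq_norm_add_natCast, ← sq_abs (s.re + k)]
      nlinarith [sq_nonneg (|s.re + k| - s.im)]
    rw [← mul_div_assoc, mul_one, div_le_div_iff₀ (by nlinarith) (by positivity)]
    linarith
  calc ∑ k ∈ range N, 1 / ‖s + k‖ ^ 2
      ≤ ∑ k ∈ range N, 2 * (1 / ((k : ℝ) + u) ^ 2) := sum_le_sum hterm
    _ ≤ 2 * (2 / u) := by rw [← mul_sum]; gcongr; exact sum_range_inv_add_sq_le (by linarith) N
    _ = 4 / u := by ring

lemma prod_range_norm_add_natCast_div_le {z w : ℂ} (hre : w.re = z.re)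
    (hz : |z.re| + 1 ≤ z.im) (N : ℕ) :
    ∏ k ∈ range N, ‖w + k‖ / ‖z + k‖ ≤
      Real.exp (2 * |w.im ^ 2 - z.im ^ 2| / (z.im - |z.re|)) := by
  set d := w.im ^ 2 - z.im ^ 2
  have hpos (k : ℕ) : 0 < ‖z + k‖ := by
    have := abs_im_le_norm (z + k)
    simp only [add_im, natCast_im, add_zero] at this
    linarith [le_abs_self z.im, abs_nonneg z.re]
  have hterm : ∀ k ∈ range N, ‖w + k‖ / ‖z + k‖ ≤ Real.exp (d / 2 * (1 / ‖z + k‖ ^ 2)) := by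
    intro k _
    have hdiff : ‖w + k‖ ^ 2 - ‖z + k‖ ^ 2 = d := by
      rw [sq_norm_add_natCast, sq_norm_add_natCast, hre]; ring
    calc ‖w + k‖ / ‖z + k‖ ≤ Real.exp ((‖w + k‖ ^ 2 - ‖z + k‖ ^ 2) / (2 * ‖z + k‖ ^ 2)) :=
          div_le_exp_sq_sub_sq_div (norm_nonneg _) (hpos k)
      _ = _ := by rw [hdiff]; ring_nf
  calc ∏ k ∈ range N, ‖w + k‖ / ‖z + k‖
      ≤ ∏ k ∈ range N, Real.exp (d / 2 * (1 / ‖z + k‖ ^ 2)) :=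
        prod_le_prod (fun k _ ↦ by positivity) hterm
    _ = Real.exp (d / 2 * ∑ k ∈ range N, 1 / ‖z + k‖ ^ 2) := by rw [← Real.exp_sum, mul_sum]
    _ ≤ Real.exp (|d| / 2 * (4 / (z.im - |z.re|))) := by
      refine Real.exp_le_exp.mpr ?_
      calc d / 2 * ∑ k ∈ range N, 1 / ‖z + k‖ ^ 2 ≤ |d| / 2 * ∑ k ∈ range N, 1 / ‖z + k‖ ^ 2 := by
            gcongr; exact le_abs_self d
        _ ≤ _ := by gcongr; exact sum_range_inv_sq_norm_add_natCast_le hz N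
    _ = _ := by ring_nf

lemma norm_GammaSeq_div_norm_GammaSeq {z w : ℂ} (hre : z.re = w.re) {n : ℕ} (hn : 0 < n) :
    ‖GammaSeq z n‖ / ‖GammaSeq w n‖ = ∏ k ∈ range (n + 1), ‖w + k‖ / ‖z + k‖ := by
  simp only [GammaSeq, norm_div, norm_mul, norm_prod, norm_natCast_cpow_of_pos hn,
    Complex.norm_natCast, hre, prod_div_distrib]
  exact div_div_div_cancel_left' _ _ (mul_ne_zero
    (Real.rpow_pos_of_pos (Nat.cast_pos.2 hn) _).ne' (Nat.cast_ne_zero.2 n.factorial_ne_zero))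

lemma norm_Gamma_div_norm_Gamma_le {z w : ℂ} (hre : w.re = z.re) (hz : |z.re| + 1 ≤ z.im) :
    ‖Gamma z‖ / ‖Gamma w‖ ≤ Real.exp (2 * |w.im ^ 2 - z.im ^ 2| / (z.im - |z.re|)) := by
  rcases eq_or_ne ‖Gamma w‖ 0 with hw | hw
  · rw [hw, div_zero]; positivity
  have hlim : Tendsto (fun n ↦ ‖GammaSeq z n‖ / ‖GammaSeq w n‖) atTop
      (𝓝 (‖Gamma z‖ / ‖Gamma w‖)) :=
    (GammaSeq_tendsto_Gamma z).norm.div (GammaSeq_tendsto_Gamma w).norm hw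
  refine le_of_tendsto hlim ?_
  filter_upwards [eventually_gt_atTop 0] with n hn
  rw [norm_GammaSeq_div_norm_GammaSeq hre.symm hn]
  exact prod_range_norm_add_natCast_div_le hre hz _

lemma Gamma_ofReal_add_mul_I_ne_zero (σ : ℝ) {t : ℝ} (ht : t ≠ 0) : Gamma (σ + t * I) ≠ 0 :=
  Gamma_ne_zero fun m h ↦ ht (by simpa using congrArg im h)

lemma norm_Gamma_div_norm_Gamma_le_exp_of_near {σ r ω t₁ t₂ : ℝ} (hω : ω < 1)
    (hr : 2 * |σ| + 4 ≤ r) (h₁ : |t₁ - r| < ω) (h₂ : |t₂ - r| < ω) :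
    ‖Gamma (σ + t₁ * I)‖ / ‖Gamma (σ + t₂ * I)‖ ≤ Real.exp (24 * ω) := by
  obtain ⟨h₁l, h₁u⟩ := abs_lt.mp h₁
  obtain ⟨h₂l, h₂u⟩ := abs_lt.mp h₂
  have hσ := abs_nonneg σ
  have hGamma := norm_Gamma_div_norm_Gamma_le (z := σ + t₁ * I) (w := σ + t₂ * I)
  simp only [add_re, ofReal_re, mul_re, I_re, mul_zero, ofReal_im, I_im, mul_one, sub_self,
    add_zero, add_im, mul_im, zero_add, forall_const] at hGamma
  refine (hGamma (by linarith)).trans ?_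
  have hdiff : |t₂ ^ 2 - t₁ ^ 2| ≤ 6 * ω * r := by
    rw [show t₂ ^ 2 - t₁ ^ 2 = (t₂ - t₁) * (t₂ + t₁) by ring, abs_mul,
      abs_of_pos (by linarith : 0 < t₂ + t₁)]
    have : |t₂ - t₁| ≤ 2 * ω := by rw [abs_le]; constructor <;> linarith
    nlinarith [abs_nonneg (t₂ - t₁)]
  gcongr
  rw [div_le_iff₀ (by linarith)]
  nlinarith

lemma norm_Gamma_div_norm_Gamma_mem_Icc_of_near {σ r ω t₁ t₂ : ℝ} (hω : ω < 1)
    (hr : 2 * |σ| + 4 ≤ r) (h₁ : |t₁ - r| < ω) (h₂ : |t₂ - r| < ω) :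
    ‖Gamma (σ + t₁ * I)‖ / ‖Gamma (σ + t₂ * I)‖ ∈
      Set.Icc (Real.exp (-(24 * ω))) (Real.exp (24 * ω)) := by
  refine ⟨?_, norm_Gamma_div_norm_Gamma_le_exp_of_near hω hr h₁ h₂⟩
  have hpos (t : ℝ) (ht : |t - r| < ω) : 0 < ‖Gamma (σ + t * I)‖ := by
    refine norm_pos_iff.mpr (Gamma_ofReal_add_mul_I_ne_zero σ ?_)
    linarith [abs_lt.mp ht, abs_nonneg σ]
  rw [Real.exp_neg, ← inv_div]
  exact inv_anti₀ (div_pos (hpos t₂ h₂) (hpos t₁ h₁))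
    (norm_Gamma_div_norm_Gamma_le_exp_of_near hω hr h₂ h₁)

theorem gamma_abs_ratio_tendsto_one_general
    (σ : ℝ) (r ω r' r'' : ℕ → ℝ)
    (hr : Tendsto r atTop atTop)
    (hω : Tendsto ω atTop (𝓝 0))
    (hr' : ∀ j, |r' j - r j| < ω j)
    (hr'' : ∀ j, |r'' j - r j| < ω j) :
    Tendsto (fun j =>
        ‖Complex.Gamma ((σ : ℂ) + (r' j : ℂ) * Complex.I)‖ /
        ‖Complex.Gamma ((σ : ℂ) + (r'' j : ℂ) * Complex.I)‖)
      atTop (𝓝 1) := by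
  have hε : Tendsto (fun j ↦ 24 * ω j) atTop (𝓝 0) := by simpa using hω.const_mul 24
  have hbounds : ∀ᶠ j in atTop,
      ‖Gamma (σ + r' j * I)‖ / ‖Gamma (σ + r'' j * I)‖ ∈
        Set.Icc (Real.exp (-(24 * ω j))) (Real.exp (24 * ω j)) := by
    filter_upwards [hr.eventually_ge_atTop (2 * |σ| + 4), hω.eventually (gt_mem_nhds one_pos)]
      with j hrj hωj
    exact norm_Gamma_div_norm_Gamma_mem_Icc_of_near hωj hrj (hr' j) (hr'' j)
  refine tendsto_of_tendsto_of_tendsto_of_le_of_le' ?_ ?_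
    (hbounds.mono fun _ h ↦ h.1) (hbounds.mono fun _ h ↦ h.2)
  · simpa using hε.neg.rexp
  · simpa using hε.rexp

theorem gamma_abs_ratio_tendsto_one
    (σ : ℝ) (r ω r' r'' : ℕ → ℝ)
    (hrpos : ∀ j, 0 < r j)
    (hr : Tendsto r atTop atTop)
    (hωpos : ∀ j, 0 < ω j)
    (hω : Tendsto ω atTop (𝓝 0))
    (hr' : ∀ j, |r' j - r j| < ω j)
    (hr'' : ∀ j, |r'' j - r j| < ω j) :
    Tendsto (fun j =>
        ‖Complex.Gamma ((σ : ℂ) + (r' j : ℂ) * Complex.I)‖ /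
        ‖Complex.Gamma ((σ : ℂ) + (r'' j : ℂ) * Complex.I)‖)
      atTop (𝓝 1) :=
  gamma_abs_ratio_tendsto_one_general σ r ω r' r'' hr hω hr' hr''
end

section
/- Let σ ∈ ℝ be fixed. Let (r_j) be a sequence of reals tending to +∞, let (ω_j) be positive reals with ω_j · log(r_j) → 0, and let (r'_j), (r''_j) be sequences of reals satisfying |r'_j − r_j| < ω_j and |r''_j − r_j| < ω_j for all j. Then Γ(σ + i r'_j) / Γ(σ + i r''_j) → 1 as j → ∞. -/
/-!
Write `t = s - δ * I` with `s = σ + τ * I`. Euler's limit formula gives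
`Γ(s) / Γ(t) = lim n ^ (δ * I) * ∏_{k ≤ n} (1 - δ * I / (s + k))`, and `log (1 + u) = u + O(u ^ 2)`
turns this product into the exponential of
`δ * I * (log n - ∑_{k ≤ n} (s + k)⁻¹) + O(δ ^ 2 * ∑_{k ≤ n} ‖s + k‖⁻¹ ^ 2)`.
When `τ` is large compared to `|σ|` we have `‖s + k‖ ≥ (k + 1 + τ) / 4`, so the bracket is
`O(log τ)` and the sum of squares is `O(1)`, uniformly in `n`. Hence
`‖Γ(s) / Γ(t) - 1‖ = O(|δ| * log τ + δ ^ 2)`, which tends to `0` when `|δ| ≤ 2 * ω` and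
`ω * log τ → 0`.
-/

open Complex Filter Topology Finset

lemma sum_range_sub_shift_le {f : ℕ → ℝ} (hf : 0 ≤ f) (m N : ℕ) :
    ∑ k ∈ range N, (f k - f (m + k)) ≤ ∑ k ∈ range m, f k := by
  have hsplit := (sum_range_add f N m).symm.trans (Nat.add_comm N m ▸ sum_range_add f m N)
  have hnonneg : 0 ≤ ∑ k ∈ range m, f (N + k) := sum_nonneg fun k _ => hf _
  rw [sum_sub_distrib]
  linarith

lemma cast_harmonic_eq_sum (n : ℕ) : (harmonic n : ℝ) = ∑ k ∈ range n, ((k : ℝ) + 1)⁻¹ := by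
  simp [harmonic]

lemma sum_inv_sub_inv_add_le {τ : ℝ} (hτ : 0 < τ) (N : ℕ) :
    ∑ k ∈ range N, (((k : ℝ) + 1)⁻¹ - ((k : ℝ) + 1 + τ)⁻¹) ≤ 1 + Real.log (τ + 1) := by
  set m := ⌈τ⌉₊
  have hm : 0 < m := Nat.ceil_pos.mpr hτ
  have hterm : ∀ k ∈ range N, ((k : ℝ) + 1)⁻¹ - ((k : ℝ) + 1 + τ)⁻¹
      ≤ ((k : ℝ) + 1)⁻¹ - (((m + k : ℕ) : ℝ) + 1)⁻¹ := by
    intro k _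
    have : τ ≤ m := Nat.le_ceil τ
    exact sub_le_sub_left (inv_anti₀ (by positivity) (by push_cast; linarith)) _
  calc _ ≤ ∑ k ∈ range N, (((k : ℝ) + 1)⁻¹ - (((m + k : ℕ) : ℝ) + 1)⁻¹) := sum_le_sum hterm
    _ ≤ ∑ k ∈ range m, ((k : ℝ) + 1)⁻¹ :=
        sum_range_sub_shift_le (f := fun k : ℕ => ((k : ℝ) + 1)⁻¹) (fun k => by positivity) m N
    _ ≤ 1 + Real.log m := by rw [← cast_harmonic_eq_sum]; exact_mod_cast harmonic_le_one_add_log m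
    _ ≤ 1 + Real.log (τ + 1) := by
        gcongr
        exact (Nat.ceil_lt_add_one hτ.le).le

lemma abs_log_sub_sum_inv_succ_le {n : ℕ} (hn : n ≠ 0) :
    |Real.log n - ∑ k ∈ range (n + 1), ((k : ℝ) + 1)⁻¹| ≤ 2 := by
  have hupper := harmonic_le_one_add_log (n + 1)
  have hlower := log_add_one_le_harmonic (n + 1)
  rw [← cast_harmonic_eq_sum]
  have hn1 : (1 : ℝ) ≤ n := by exact_mod_cast Nat.one_le_iff_ne_zero.mpr hn
  have hlog_succ : Real.log (n + 1) ≤ Real.log n + 1 := by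
    calc Real.log (n + 1) ≤ Real.log (2 * n) := by gcongr; linarith
      _ = Real.log 2 + Real.log n := Real.log_mul two_ne_zero (by positivity)
      _ ≤ Real.log n + 1 := by linarith [Real.log_two_lt_d9]
  have hlog_le : Real.log n ≤ Real.log (n + 1 + 1) := by gcongr; linarith
  push_cast at hupper hlower
  rw [abs_le]
  constructor <;> linarith

lemma norm_add_natCast_ge {s : ℂ} (hs : 2 * |s.re| + 2 ≤ s.im) (k : ℕ) :
    ((k : ℝ) + 1 + s.im) / 4 ≤ ‖s + k‖ := by
  have him : s.im ≤ ‖s + k‖ := by simpa using (le_abs_self _).trans (abs_im_le_norm (s + k))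
  have hre : s.re + k ≤ ‖s + k‖ := by simpa using re_le_norm (s + k)
  linarith [neg_abs_le s.re]

lemma norm_inv_sub_inv_le {s : ℂ} (hs : 2 * |s.re| + 2 ≤ s.im) (k : ℕ) :
    ‖((k : ℂ) + 1)⁻¹ - (s + k)⁻¹‖ ≤ 8 * (((k : ℝ) + 1)⁻¹ - ((k : ℝ) + 1 + s.im)⁻¹) := by
  have hkτ : 0 < (k : ℝ) + 1 + s.im := by linarith [abs_nonneg s.re, k.cast_nonneg (α := ℝ)]
  have hz := norm_add_natCast_ge hs k
  have hk : ((k : ℂ) + 1) ≠ 0 := by exact_mod_cast Nat.succ_ne_zero k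
  have hz0 : s + k ≠ 0 := norm_pos_iff.mp (by linarith)
  have hσ := abs_nonneg s.re
  have hnum : ‖s - 1‖ ≤ 2 * s.im := by
    calc ‖s - 1‖ ≤ |s.re - 1| + |s.im| := by simpa using norm_le_abs_re_add_abs_im (s - 1)
      _ ≤ (|s.re| + 1) + s.im := by
          gcongr
          · exact (abs_sub _ _).trans (by simp)
          · exact (abs_of_nonneg (by linarith)).le
      _ ≤ 2 * s.im := by linarith
  have hk_norm : ‖(k : ℂ) + 1‖ = (k : ℝ) + 1 := by exact_mod_cast Complex.norm_natCast (k + 1)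
  calc ‖((k : ℂ) + 1)⁻¹ - (s + k)⁻¹‖ = ‖s - 1‖ / (((k : ℝ) + 1) * ‖s + k‖) := by
        rw [inv_sub_inv hk hz0, norm_div, norm_mul, hk_norm]; ring_nf
    _ ≤ 2 * s.im / (((k : ℝ) + 1) * (((k : ℝ) + 1 + s.im) / 4)) := by
        gcongr
        linarith
    _ = 8 * (((k : ℝ) + 1)⁻¹ - ((k : ℝ) + 1 + s.im)⁻¹) := by
        field_simp
        ring

lemma sum_inv_norm_add_natCast_sq_le {s : ℂ} (hs : 2 * |s.re| + 2 ≤ s.im) (N : ℕ) :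
    ∑ k ∈ range N, ‖s + k‖⁻¹ ^ 2 ≤ 8 := by
  have hτ : 2 ≤ s.im := by linarith [abs_nonneg s.re]
  set f : ℕ → ℝ := fun k => 16 * ((k : ℝ) + s.im)⁻¹
  have hterm : ∀ k ∈ range N, ‖s + k‖⁻¹ ^ 2 ≤ f k - f (k + 1) := by
    intro k _
    have hz := norm_add_natCast_ge hs k
    calc ‖s + k‖⁻¹ ^ 2 ≤ ((((k : ℝ) + 1 + s.im) / 4)⁻¹) ^ 2 := by
          gcongr
      _ ≤ f k - f (k + 1) := by
          simp only [f]
          push_cast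
          rw [inv_pow, ← mul_sub, inv_sub_inv (by positivity) (by positivity)]
          field_simp
          ring_nf
          linarith
  calc ∑ k ∈ range N, ‖s + k‖⁻¹ ^ 2 ≤ ∑ k ∈ range N, (f k - f (k + 1)) := sum_le_sum hterm
    _ = f 0 - f N := sum_range_sub' f N
    _ ≤ 8 := by
        simp only [f, CharP.cast_eq_zero, zero_add]
        have : 0 ≤ 16 * ((N : ℝ) + s.im)⁻¹ := by positivity
        have : 16 * s.im⁻¹ ≤ 8 := by
          rw [← div_eq_mul_inv, div_le_iff₀ (by linarith)]; linarith
        linarith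

lemma norm_log_sub_sum_inv_le {s : ℂ} (hs : 2 * |s.re| + 2 ≤ s.im) {n : ℕ} (hn : n ≠ 0) :
    ‖(Real.log n : ℂ) - ∑ k ∈ range (n + 1), (s + k)⁻¹‖ ≤ 10 + 8 * Real.log (s.im + 1) := by
  have hτ : 0 < s.im := by linarith [abs_nonneg s.re]
  have hsplit : (Real.log n : ℂ) - ∑ k ∈ range (n + 1), (s + k)⁻¹
      = ((Real.log n - ∑ k ∈ range (n + 1), ((k : ℝ) + 1)⁻¹ : ℝ) : ℂ)
        + ∑ k ∈ range (n + 1), (((k : ℂ) + 1)⁻¹ - (s + k)⁻¹) := by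
    push_cast
    rw [sum_sub_distrib]
    ring
  have hsum : ‖∑ k ∈ range (n + 1), (((k : ℂ) + 1)⁻¹ - (s + k)⁻¹)‖
      ≤ 8 * (1 + Real.log (s.im + 1)) := by
    calc _ ≤ ∑ k ∈ range (n + 1), 8 * (((k : ℝ) + 1)⁻¹ - ((k : ℝ) + 1 + s.im)⁻¹) :=
          (norm_sum_le _ _).trans (sum_le_sum fun k _ => norm_inv_sub_inv_le hs k)
      _ ≤ 8 * (1 + Real.log (s.im + 1)) := by
          rw [← mul_sum]
          gcongr
          exact sum_inv_sub_inv_add_le hτ _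
  rw [hsplit]
  refine (norm_add_le _ _).trans ?_
  rw [Complex.norm_real, Real.norm_eq_abs]
  linarith [abs_log_sub_sum_inv_succ_le hn]

lemma norm_log_one_add_sub_self_le_sq {z : ℂ} (hz : ‖z‖ ≤ 1 / 2) :
    ‖log (1 + z) - z‖ ≤ ‖z‖ ^ 2 := by
  refine (norm_log_one_add_sub_self_le (by linarith)).trans ?_
  have h2 : (1 - ‖z‖)⁻¹ ≤ 2 := by
    rw [inv_le_comm₀ (by linarith) two_pos]; linarith
  have := sq_nonneg ‖z‖
  nlinarith

lemma norm_exp_mul_prod_one_add_sub_one_le {ι : Type*} {S : Finset ι} {w : ℂ} {u : ι → ℂ}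
    {B : ℝ} (hu : ∀ k ∈ S, ‖u k‖ ≤ 1 / 2) (hB : ‖w + ∑ k ∈ S, u k‖ + ∑ k ∈ S, ‖u k‖ ^ 2 ≤ B)
    (hB1 : B ≤ 1) :
    ‖exp w * ∏ k ∈ S, (1 + u k) - 1‖ ≤ 2 * B := by
  set E := w + ∑ k ∈ S, log (1 + u k)
  have hexp : exp E = exp w * ∏ k ∈ S, (1 + u k) := by
    rw [exp_add, exp_sum]
    congr 1
    refine prod_congr rfl fun k hk => exp_log fun h => ?_
    have : ‖u k‖ = 1 := by rw [eq_neg_of_add_eq_zero_right h, norm_neg, norm_one]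
    linarith [hu k hk]
  have hE : ‖E‖ ≤ B := by
    have hsplit : E = (w + ∑ k ∈ S, u k) + ∑ k ∈ S, (log (1 + u k) - u k) := by
      simp only [E, sum_sub_distrib]; ring
    calc ‖E‖ ≤ ‖w + ∑ k ∈ S, u k‖ + ∑ k ∈ S, ‖log (1 + u k) - u k‖ := by
          rw [hsplit]; exact (norm_add_le _ _).trans (by gcongr; exact norm_sum_le _ _)
      _ ≤ ‖w + ∑ k ∈ S, u k‖ + ∑ k ∈ S, ‖u k‖ ^ 2 := by
          gcongr with k hk
          exact norm_log_one_add_sub_self_le_sq (hu k hk)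
      _ ≤ B := hB
  rw [← hexp]
  exact (norm_exp_sub_one_le (hE.trans hB1)).trans (by linarith)

lemma GammaSeq_div_GammaSeq {s t : ℂ} (hs : ∀ k : ℕ, s + k ≠ 0) (ht : ∀ k : ℕ, t + k ≠ 0)
    {n : ℕ} (hn : n ≠ 0) :
    GammaSeq s n / GammaSeq t n = (n : ℂ) ^ (s - t) * ∏ k ∈ range (n + 1), (t + k) / (s + k) := by
  have hn' : (n : ℂ) ≠ 0 := Nat.cast_ne_zero.mpr hn
  have hs' := prod_ne_zero_iff.mpr fun k (_ : k ∈ range (n + 1)) => hs k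
  have ht' := prod_ne_zero_iff.mpr fun k (_ : k ∈ range (n + 1)) => ht k
  rw [GammaSeq, GammaSeq, cpow_sub _ _ hn', prod_div_distrib]
  have hpow : (n : ℂ) ^ t ≠ 0 := by rw [cpow_def_of_ne_zero hn']; exact exp_ne_zero _
  have hfact : (n.factorial : ℂ) ≠ 0 := Nat.cast_ne_zero.mpr n.factorial_ne_zero
  field_simp

lemma add_natCast_ne_zero_of_im_pos {z : ℂ} (hz : 0 < z.im) (k : ℕ) : z + k ≠ 0 := fun h => by
  have := congrArg im h
  simp only [add_im, natCast_im, add_zero, zero_im] at this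
  linarith

lemma abs_le_one_of_abs_mul_add_sq_le_one {τ δ : ℝ} (hτ : 0 ≤ τ)
    (hB : |δ| * (10 + 8 * Real.log (τ + 1)) + 8 * δ ^ 2 ≤ 1) : |δ| ≤ 1 := by
  have := Real.log_nonneg (by linarith : (1 : ℝ) ≤ τ + 1)
  nlinarith [abs_nonneg δ, sq_nonneg δ]

lemma norm_GammaSeq_div_GammaSeq_sub_mul_I_sub_one_le {s : ℂ} (hs : 2 * |s.re| + 2 ≤ s.im)
    {δ : ℝ} (hB : |δ| * (10 + 8 * Real.log (s.im + 1)) + 8 * δ ^ 2 ≤ 1) {n : ℕ} (hn : n ≠ 0) :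
    ‖GammaSeq s n / GammaSeq (s - δ * I) n - 1‖
      ≤ 2 * (|δ| * (10 + 8 * Real.log (s.im + 1)) + 8 * δ ^ 2) := by
  have hτ : 2 ≤ s.im := by linarith [abs_nonneg s.re]
  have hs0 := add_natCast_ne_zero_of_im_pos (z := s) (by linarith)
  have hδ := abs_le_one_of_abs_mul_add_sq_le_one (by linarith) hB
  have ht0 := add_natCast_ne_zero_of_im_pos (z := s - δ * I) (by
    simp only [sub_im, mul_im, ofReal_re, I_im, mul_one, ofReal_im, I_re, mul_zero, add_zero]
    linarith [le_abs_self δ])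
  set u : ℕ → ℂ := fun k => -(δ * I) * (s + k)⁻¹
  have hfactor : ∀ k : ℕ, (s - δ * I + k) / (s + k) = 1 + u k := fun k => by
    simp only [u]
    field_simp [hs0 k]
    ring
  have hu_norm : ∀ k : ℕ, ‖u k‖ = |δ| * ‖s + k‖⁻¹ := fun k => by simp [u]
  have hu : ∀ k ∈ range (n + 1), ‖u k‖ ≤ 1 / 2 := fun k _ => by
    have : 2 ≤ ‖s + k‖ := hτ.trans (by simpa using (le_abs_self _).trans (abs_im_le_norm (s + k)))
    rw [hu_norm]
    calc |δ| * ‖s + k‖⁻¹ ≤ 1 * 2⁻¹ := by gcongr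
      _ = 1 / 2 := by norm_num
  have hsum_u : (Real.log n : ℂ) * (δ * I) + ∑ k ∈ range (n + 1), u k
      = δ * I * ((Real.log n : ℂ) - ∑ k ∈ range (n + 1), (s + k)⁻¹) := by
    simp only [u, ← mul_sum]; ring
  have hsq : ∑ k ∈ range (n + 1), ‖u k‖ ^ 2 ≤ 8 * δ ^ 2 := by
    simp_rw [hu_norm, mul_pow, ← mul_sum, sq_abs]
    linarith [mul_le_mul_of_nonneg_left (sum_inv_norm_add_natCast_sq_le hs (n + 1)) (sq_nonneg δ)]
  rw [GammaSeq_div_GammaSeq hs0 ht0 hn, sub_sub_cancel,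
    cpow_def_of_ne_zero (Nat.cast_ne_zero.mpr hn), ← natCast_log,
    prod_congr rfl fun k _ => hfactor k]
  refine norm_exp_mul_prod_one_add_sub_one_le hu ?_ hB
  rw [hsum_u, norm_mul, norm_mul, norm_I, mul_one, norm_real, Real.norm_eq_abs]
  exact add_le_add (mul_le_mul_of_nonneg_left (norm_log_sub_sum_inv_le hs hn) (abs_nonneg δ)) hsq

theorem norm_Gamma_div_Gamma_sub_mul_I_sub_one_le {s : ℂ} (hs : 2 * |s.re| + 2 ≤ s.im) {δ : ℝ}
    (hB : |δ| * (10 + 8 * Real.log (s.im + 1)) + 8 * δ ^ 2 ≤ 1) :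
    ‖Gamma s / Gamma (s - δ * I) - 1‖
      ≤ 2 * (|δ| * (10 + 8 * Real.log (s.im + 1)) + 8 * δ ^ 2) := by
  have hτ : 2 ≤ s.im := by linarith [abs_nonneg s.re]
  have hδ := abs_le_one_of_abs_mul_add_sq_le_one (by linarith) hB
  have hΓ : Gamma (s - δ * I) ≠ 0 := Gamma_ne_zero fun m h => by
    have him := congrArg im h
    simp only [sub_im, mul_im, ofReal_re, I_im, mul_one, ofReal_im, I_re, mul_zero, add_zero,
      neg_im, natCast_im, neg_zero] at him
    linarith [le_abs_self δ]
  exact le_of_tendsto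
    (((GammaSeq_tendsto_Gamma s).div (GammaSeq_tendsto_Gamma _) hΓ).sub_const 1).norm
    (eventually_atTop.2 ⟨1, fun n hn =>
      norm_GammaSeq_div_GammaSeq_sub_mul_I_sub_one_le hs hB (Nat.one_le_iff_ne_zero.mp hn)⟩)

theorem norm_Gamma_div_Gamma_sub_one_le_of_abs_sub_lt {σ ρ ε τ τ' : ℝ}
    (hρ : 2 * |σ| + 3 ≤ ρ) (hτ : |τ - ρ| < ε) (hτ' : |τ' - ρ| < ε)
    (hc : 2 * ε * (18 + 8 * Real.log ρ) + 32 * ε ^ 2 ≤ 1) :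
    ‖Gamma (σ + τ * I) / Gamma (σ + τ' * I) - 1‖
      ≤ 2 * (2 * ε * (18 + 8 * Real.log ρ) + 32 * ε ^ 2) := by
  have hε0 : 0 ≤ ε := (abs_nonneg _).trans hτ.le
  have hlogρ : 0 ≤ Real.log ρ := Real.log_nonneg (by linarith [abs_nonneg σ])
  have hε1 : ε ≤ 1 := by nlinarith
  obtain ⟨hτ_lo, hτ_hi⟩ := abs_lt.mp hτ
  have hδ : |τ - τ'| ≤ 2 * ε := by
    linarith [abs_sub_le τ ρ τ', abs_sub_comm ρ τ']
  have hlog : Real.log (τ + 1) ≤ Real.log ρ + 1 := by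
    calc Real.log (τ + 1) ≤ Real.log (2 * ρ) := by
          gcongr
          · linarith [abs_nonneg σ]
          · linarith [abs_nonneg σ]
      _ = Real.log 2 + Real.log ρ := Real.log_mul two_ne_zero (by linarith [abs_nonneg σ])
      _ ≤ Real.log ρ + 1 := by linarith [Real.log_two_lt_d9]
  have hlogτ : 0 ≤ Real.log (τ + 1) := Real.log_nonneg (by linarith [abs_nonneg σ])
  have hB : |τ - τ'| * (10 + 8 * Real.log (τ + 1)) + 8 * (τ - τ') ^ 2
      ≤ 2 * ε * (18 + 8 * Real.log ρ) + 32 * ε ^ 2 := by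
    have hlin : |τ - τ'| * (10 + 8 * Real.log (τ + 1)) ≤ 2 * ε * (18 + 8 * Real.log ρ) :=
      mul_le_mul hδ (by linarith) (by linarith) (by positivity)
    have hsq : (τ - τ') ^ 2 ≤ (2 * ε) ^ 2 := by
      rw [← sq_abs]; exact pow_le_pow_left₀ (abs_nonneg _) hδ 2
    linarith
  have hs : 2 * |(σ + τ * I : ℂ).re| + 2 ≤ (σ + τ * I : ℂ).im := by
    simp only [add_re, ofReal_re, mul_re, I_re, mul_zero, ofReal_im, I_im, mul_one, sub_self,
      add_zero, add_im, mul_im, zero_add]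
    linarith
  have key :=
    norm_Gamma_div_Gamma_sub_mul_I_sub_one_le hs (δ := τ - τ') (by simpa using hB.trans hc)
  have ht : (σ + τ * I : ℂ) - ((τ - τ' : ℝ) : ℂ) * I = σ + τ' * I := by push_cast; ring
  rw [ht] at key
  simp only [add_im, ofReal_im, mul_im, ofReal_re, I_im, mul_one, I_re, mul_zero, add_zero,
    zero_add] at key
  linarith

lemma tendsto_zero_of_mul_log_tendsto_zero {α : Type*} {l : Filter α} {r ω : α → ℝ}
    (hr : Tendsto r l atTop) (hω : ∀ j, 0 ≤ ω j)
    (h : Tendsto (fun j => ω j * Real.log (r j)) l (𝓝 0)) : Tendsto ω l (𝓝 0) := by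
  refine squeeze_zero' (Eventually.of_forall hω) ?_ h
  filter_upwards [(Real.tendsto_log_atTop.comp hr).eventually_ge_atTop 1] with j hj
  exact le_mul_of_one_le_right (hω j) hj

theorem gamma_ratio_tendsto_one_general
    (σ : ℝ) (r ω r' r'' : ℕ → ℝ)
    (hr : Tendsto r atTop atTop)
    (hω : Tendsto (fun j => ω j * Real.log (r j)) atTop (𝓝 0))
    (hr' : ∀ j, |r' j - r j| < ω j)
    (hr'' : ∀ j, |r'' j - r j| < ω j) :
    Tendsto (fun j =>
        Complex.Gamma ((σ : ℂ) + (r' j : ℂ) * Complex.I) /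
          Complex.Gamma ((σ : ℂ) + (r'' j : ℂ) * Complex.I))
      atTop (𝓝 1) := by
  have hω0 : Tendsto ω atTop (𝓝 0) :=
    tendsto_zero_of_mul_log_tendsto_zero hr (fun j => (abs_nonneg _).trans (hr' j).le) hω
  set c : ℕ → ℝ := fun j => 2 * ω j * (18 + 8 * Real.log (r j)) + 32 * ω j ^ 2
  have hc : Tendsto c atTop (𝓝 0) := by
    have := ((hω0.const_mul 36).add (hω.const_mul 16)).add ((hω0.pow 2).const_mul 32)
    simp only [mul_zero, add_zero, ne_eq, OfNat.ofNat_ne_zero, not_false_eq_true,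
      zero_pow] at this
    exact this.congr fun j => by simp only [c]; ring
  rw [tendsto_iff_norm_sub_tendsto_zero]
  refine squeeze_zero' (Eventually.of_forall fun j => norm_nonneg _) ?_
    (by simpa using hc.const_mul 2)
  filter_upwards [hr.eventually_ge_atTop (2 * |σ| + 3), hc.eventually (ge_mem_nhds one_pos)]
    with j hrj hcj
  exact norm_Gamma_div_Gamma_sub_one_le_of_abs_sub_lt hrj (hr' j) (hr'' j) hcj

theorem gamma_ratio_tendsto_one
    (σ : ℝ) (r ω r' r'' : ℕ → ℝ)
    (hr : Tendsto r atTop atTop)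
    (hωpos : ∀ j, 0 < ω j)
    (hω : Tendsto (fun j => ω j * Real.log (r j)) atTop (𝓝 0))
    (hr' : ∀ j, |r' j - r j| < ω j)
    (hr'' : ∀ j, |r'' j - r j| < ω j) :
    Tendsto (fun j =>
        Complex.Gamma ((σ : ℂ) + (r' j : ℂ) * Complex.I) /
          Complex.Gamma ((σ : ℂ) + (r'' j : ℂ) * Complex.I))
      atTop (𝓝 1) :=
  gamma_ratio_tendsto_one_general σ r ω r' r'' hr hω hr' hr''
end

section
/- Let r', r'' be real numbers and let s ∈ ℂ with Re(s) > 1. Then the series ∑_{n=1}^∞ σ_{2ir'}(n) · σ_{−2ir''}(n) · n^{−(s + i(r' − r''))} converges and equals ζ(s + i(r' − r'')) · ζ(s − i(r' + r'')) · ζ(s + i(r' + r'')) · ζ(s − i(r' − r'')) / ζ(2s). -/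
open Complex Filter Topology

/-- The divisor sum `σ_w(n) = ∑_{d ∣ n} d^w` with complex exponent `w`. -/
noncomputable def csigma (w : ℂ) (n : ℕ) : ℂ := ∑ d ∈ n.divisors, (d : ℂ) ^ w

namespace RamAux

open Finset

/-! ### Pure algebraic/combinatorial identities -/

noncomputable def cfun (X Y : ℂ) (r : ℕ) : ℂ := ∑ j ∈ range (r + 1), X ^ j * Y ^ (r - j)

noncomputable def Bfun (X Y : ℂ) (m : ℕ) : ℂ :=
  ∑ l ∈ range (m + 1), (X * Y) ^ l * cfun X Y (m - l)

noncomputable def Sfun (X Y : ℂ) (e : ℕ) : ℂ :=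
  ∑ l ∈ range (e + 1), (X * Y) ^ l *
    ∑ j ∈ range (e - l + 1), X ^ j * ∑ k ∈ range (e - l - j + 1), Y ^ k

noncomputable def Tfun (X Y : ℂ) (e : ℕ) : ℂ :=
  (∑ j ∈ range (e + 1), X ^ j) * (∑ k ∈ range (e + 1), Y ^ k)

lemma conv_psum (u v : ℕ → ℂ) (m : ℕ) :
    ∑ l ∈ range (m + 1), u l * ∑ k ∈ range (m - l + 1), v k
      = ∑ r ∈ range (m + 1), ∑ l ∈ range (r + 1), u l * v (r - l) := by
  simp_rw [Finset.mul_sum]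
  rw [Finset.sum_sigma', Finset.sum_sigma']
  refine Finset.sum_nbij' (fun p => ⟨p.1 + p.2, p.1⟩) (fun p => ⟨p.2, p.1 - p.2⟩) ?_ ?_ ?_ ?_ ?_
  · rintro ⟨l, k⟩ h
    simp only [Finset.mem_sigma, Finset.mem_range] at h ⊢
    omega
  · rintro ⟨r, l⟩ h
    simp only [Finset.mem_sigma, Finset.mem_range] at h ⊢
    omega
  · rintro ⟨l, k⟩ h; simp
  · rintro ⟨r, l⟩ h
    simp only [Finset.mem_sigma, Finset.mem_range] at h
    have : l + (r - l) = r := by omega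
    simp [this]
  · rintro ⟨l, k⟩ h
    simp only [Finset.mem_sigma, Finset.mem_range] at h
    simp

lemma S_eq_sum_B (X Y : ℂ) (e : ℕ) : Sfun X Y e = ∑ r ∈ range (e + 1), Bfun X Y r := by
  unfold Sfun
  have inner : ∀ m : ℕ, ∑ j ∈ range (m + 1), X ^ j * ∑ k ∈ range (m - j + 1), Y ^ k
      = ∑ r ∈ range (m + 1), cfun X Y r := fun m => conv_psum (X ^ ·) (Y ^ ·) m
  simp_rw [inner]
  exact conv_psum ((X * Y) ^ ·) (cfun X Y) e

lemma B_succ (X Y : ℂ) (m : ℕ) :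
    Bfun X Y (m + 1) = cfun X Y (m + 1) + X * Y * Bfun X Y m := by
  unfold Bfun
  rw [Finset.sum_range_succ']
  simp only [pow_zero, one_mul, Nat.sub_zero, Nat.succ_sub_succ, pow_succ]
  rw [Finset.mul_sum]
  rw [add_comm]
  congr 1
  exact Finset.sum_congr rfl fun i _ => by ring
lemma c_part (X Y : ℂ) (m : ℕ) :
    ∑ r ∈ range m, cfun X Y r
      = ∑ p ∈ (range (m + 1) ×ˢ range (m + 1)).filter (fun p => p.1 + p.2 < m),
          X ^ p.1 * Y ^ p.2 := by
  unfold cfun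
  rw [Finset.sum_sigma']
  refine Finset.sum_nbij' (fun p => (p.2, p.1 - p.2)) (fun p => ⟨p.1 + p.2, p.1⟩) ?_ ?_ ?_ ?_ ?_
  · rintro ⟨r, j⟩ h
    simp only [Finset.mem_sigma, Finset.mem_range] at h
    simp only [Finset.mem_filter, Finset.mem_product, Finset.mem_range]
    omega
  · rintro ⟨u, v⟩ h
    simp only [Finset.mem_filter, Finset.mem_product, Finset.mem_range] at h
    simp only [Finset.mem_sigma, Finset.mem_range]
    omega
  · rintro ⟨r, j⟩ h
    simp only [Finset.mem_sigma, Finset.mem_range] at h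
    have : j + (r - j) = r := by omega
    simp [this]
  · rintro ⟨u, v⟩ h; simp
  · rintro ⟨r, j⟩ h; rfl

lemma B_part (X Y : ℂ) (m : ℕ) :
    Bfun X Y m
      = ∑ p ∈ (range (m + 1) ×ˢ range (m + 1)).filter (fun p => ¬ p.1 + p.2 < m),
          X ^ p.1 * Y ^ p.2 := by
  unfold Bfun cfun
  simp_rw [Finset.mul_sum]
  rw [Finset.sum_sigma']
  refine Finset.sum_nbij' (fun p => (p.1 + p.2, m - p.2)) (fun p => ⟨p.1 + p.2 - m, m - p.2⟩)
    ?_ ?_ ?_ ?_ ?_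
  · rintro ⟨l, j⟩ h
    simp only [Finset.mem_sigma, Finset.mem_range] at h
    simp only [Finset.mem_filter, Finset.mem_product, Finset.mem_range]
    omega
  · rintro ⟨u, v⟩ h
    simp only [Finset.mem_filter, Finset.mem_product, Finset.mem_range] at h
    simp only [Finset.mem_sigma, Finset.mem_range]
    omega
  · rintro ⟨l, j⟩ h
    simp only [Finset.mem_sigma, Finset.mem_range] at h
    have h1 : l + j + (m - j) - m = l := by omega
    have h2 : m - (m - j) = j := by omega
    simp [h1, h2]
  · rintro ⟨u, v⟩ h
    simp only [Finset.mem_filter, Finset.mem_product, Finset.mem_range] at h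
    have h1 : u + v - m + (m - v) = u := by omega
    have h2 : m - (m - v) = v := by omega
    simp [h1, h2]
  · rintro ⟨l, j⟩ h
    simp only [Finset.mem_sigma, Finset.mem_range] at h
    simp only []
    have h2 : m - j = l + (m - l - j) := by omega
    rw [mul_pow, h2, pow_add, pow_add]
    ring

lemma T_split (X Y : ℂ) (m : ℕ) :
    Tfun X Y m = Bfun X Y m + ∑ r ∈ range m, cfun X Y r := by
  unfold Tfun
  rw [Finset.sum_mul_sum]
  have : (∑ i ∈ range (m+1), ∑ j ∈ range (m+1), X ^ i * Y ^ j)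
      = ∑ p ∈ (range (m + 1) ×ˢ range (m + 1)), X ^ p.1 * Y ^ p.2 := by
    rw [Finset.sum_product]
  rw [this, ← Finset.sum_filter_add_sum_filter_not _ (fun p => p.1 + p.2 < m), c_part, B_part]
  ring

lemma B_zero (X Y : ℂ) : Bfun X Y 0 = 1 := by simp [Bfun, cfun]

lemma key (X Y : ℂ) (e : ℕ) : Sfun X Y (e + 2) = Tfun X Y (e + 2) + X * Y * Sfun X Y e := by
  rw [T_split, S_eq_sum_B, S_eq_sum_B]
  rw [Finset.sum_range_succ]
  have peel : ∑ r ∈ range (e + 2), Bfun X Y r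
      = Bfun X Y 0 + ∑ i ∈ range (e + 1), Bfun X Y (i + 1) := by
    rw [Finset.sum_range_succ']; ring
  have csum : ∑ r ∈ range (e + 2), cfun X Y r
      = cfun X Y 0 + ∑ i ∈ range (e + 1), cfun X Y (i + 1) := by
    rw [Finset.sum_range_succ']; ring
  rw [peel, csum]
  simp_rw [B_succ]
  rw [Finset.sum_add_distrib, ← Finset.mul_sum, B_zero]
  have : cfun X Y 0 = 1 := by simp [cfun]
  rw [this]
  ring

lemma ST_zero (X Y : ℂ) : Sfun X Y 0 = Tfun X Y 0 := by simp [Sfun, Tfun]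

lemma ST_one (X Y : ℂ) : Sfun X Y 1 = Tfun X Y 1 := by
  simp [Sfun, Tfun, Finset.sum_range_succ]
  ring

/-! ### Arithmetic functions -/

open ArithmeticFunction

noncomputable def zc : ArithmeticFunction ℂ := ↑(ArithmeticFunction.zeta)

lemma zc_apply {n : ℕ} (hn : n ≠ 0) : zc n = 1 := by
  simp [zc, natCoe_apply, hn]

lemma isMult_zc : zc.IsMultiplicative := isMultiplicative_zeta.natCast

noncomputable def dpow (w : ℂ) : ArithmeticFunction ℂ :=
  ⟨fun n => if n = 0 then 0 else (n : ℂ) ^ w, by simp⟩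

lemma dpow_apply (w : ℂ) {n : ℕ} (hn : n ≠ 0) : dpow w n = (n : ℂ) ^ w := by
  simp [dpow, hn]

lemma natpow_cpow (p i : ℕ) (w : ℂ) : ((p ^ i : ℕ) : ℂ) ^ w = ((p : ℂ) ^ w) ^ i := by
  induction i with
  | zero => simp
  | succ i ih =>
    rw [pow_succ, Nat.cast_mul, natCast_mul_natCast_cpow, ih, pow_succ]

lemma isMult_dpow (w : ℂ) : (dpow w).IsMultiplicative := by
  refine ⟨by simp [dpow], @fun m n _ => ?_⟩
  rcases eq_or_ne m 0 with rfl | hm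
  · simp [dpow]
  rcases eq_or_ne n 0 with rfl | hn
  · simp [dpow]
  rw [dpow_apply w (mul_ne_zero hm hn), dpow_apply w hm, dpow_apply w hn, Nat.cast_mul,
    natCast_mul_natCast_cpow]

noncomputable def sig (w : ℂ) : ArithmeticFunction ℂ := zc * dpow w

lemma isMult_sig (w : ℂ) : (sig w).IsMultiplicative := isMult_zc.mul (isMult_dpow w)

lemma sig_eq_csigma (w : ℂ) (n : ℕ) : sig w n = csigma w n := by
  rw [sig, zc, coe_zeta_mul_apply]
  exact Finset.sum_congr rfl fun d hd => dpow_apply w (Nat.pos_of_mem_divisors hd).ne'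

lemma sig_prime_pow (w : ℂ) {p : ℕ} (hp : p.Prime) (e : ℕ) :
    sig w (p ^ e) = ∑ i ∈ Finset.range (e + 1), ((p : ℂ) ^ w) ^ i := by
  rw [sig, zc, coe_zeta_mul_apply, Nat.sum_divisors_prime_pow hp]
  exact Finset.sum_congr rfl fun i _ =>
    by rw [dpow_apply w (pow_ne_zero _ hp.pos.ne'), natpow_cpow]

lemma mul_apply_prime_pow (f g : ArithmeticFunction ℂ) {p : ℕ} (hp : p.Prime) (e : ℕ) :
    (f * g) (p ^ e) = ∑ i ∈ Finset.range (e + 1), f (p ^ i) * g (p ^ (e - i)) := by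
  rw [mul_apply, Nat.sum_divisorsAntidiagonal (f · * g ·), Nat.sum_divisors_prime_pow hp]
  refine Finset.sum_congr rfl fun i hi => ?_
  rw [Nat.pow_div (Nat.lt_succ_iff.mp (Finset.mem_range.mp hi)) hp.pos]

noncomputable def quad (a b : ℂ) : ArithmeticFunction ℂ :=
  dpow (a + b) * (dpow a * (dpow b * zc))

lemma isMult_quad (a b : ℂ) : (quad a b).IsMultiplicative :=
  (isMult_dpow _).mul ((isMult_dpow _).mul ((isMult_dpow _).mul isMult_zc))

lemma quad_prime_pow (a b : ℂ) {p : ℕ} (hp : p.Prime) (e : ℕ) :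
    quad a b (p ^ e) = Sfun ((p : ℂ) ^ a) ((p : ℂ) ^ b) e := by
  have hpc : (p : ℂ) ≠ 0 := Nat.cast_ne_zero.mpr hp.pos.ne'
  have hXY : ∀ i : ℕ, dpow (a + b) (p ^ i) = ((p : ℂ) ^ a * (p : ℂ) ^ b) ^ i := fun i => by
    rw [dpow_apply _ (pow_ne_zero _ hp.pos.ne'), natpow_cpow, cpow_add _ _ hpc]
  rw [quad, mul_apply_prime_pow _ _ hp]
  unfold Sfun
  refine Finset.sum_congr rfl fun l _ => ?_
  rw [hXY, mul_apply_prime_pow _ _ hp]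
  congr 1
  refine Finset.sum_congr rfl fun j _ => ?_
  rw [dpow_apply a (pow_ne_zero _ hp.pos.ne'), natpow_cpow, mul_apply_prime_pow _ _ hp]
  congr 1
  refine Finset.sum_congr rfl fun k _ => ?_
  rw [dpow_apply b (pow_ne_zero _ hp.pos.ne'), natpow_cpow, zc_apply (pow_ne_zero _ hp.pos.ne')]
  ring

/-! ### The square-supported Möbius-type function -/

noncomputable def sqmu (a b : ℂ) : ArithmeticFunction ℂ :=
  ⟨fun n => if n.sqrt * n.sqrt = n then ((moebius n.sqrt : ℤ) : ℂ) * (n.sqrt : ℂ) ^ (a + b)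
      else 0, by simp⟩

lemma sqmu_apply (a b : ℂ) (n : ℕ) :
    sqmu a b n = if n.sqrt * n.sqrt = n
      then ((moebius n.sqrt : ℤ) : ℂ) * (n.sqrt : ℂ) ^ (a + b) else 0 := rfl

lemma sqmu_sq (a b : ℂ) (k : ℕ) :
    sqmu a b (k * k) = ((moebius k : ℤ) : ℂ) * (k : ℂ) ^ (a + b) := by
  rw [sqmu_apply, Nat.sqrt_eq, if_pos rfl]

lemma isMult_sqmu (a b : ℂ) : (sqmu a b).IsMultiplicative := by
  refine ⟨by simp [sqmu_apply], @fun m n hmn => ?_⟩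
  rcases eq_or_ne m 0 with rfl | hm
  · simp
  rcases eq_or_ne n 0 with rfl | hn
  · simp
  by_cases hsq : (m * n).sqrt * (m * n).sqrt = m * n
  · obtain ⟨d, hd⟩ : ∃ d, m = d ^ 2 :=
      exists_eq_pow_of_mul_eq_pow (Nat.isUnit_iff.mpr hmn)
        (show m * n = (m * n).sqrt ^ 2 by rw [sq, hsq])
    obtain ⟨e, he⟩ : ∃ e, n = e ^ 2 :=
      exists_eq_pow_of_mul_eq_pow (Nat.isUnit_iff.mpr hmn.symm)
        (show n * m = (m * n).sqrt ^ 2 by rw [sq, mul_comm n m, hsq])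
    subst hd he
    have hde : d.Coprime e :=
      Nat.Coprime.coprime_dvd_left (dvd_pow_self d two_ne_zero)
        (Nat.Coprime.coprime_dvd_right (dvd_pow_self e two_ne_zero) hmn)
    have h1 : d ^ 2 * e ^ 2 = (d * e) * (d * e) := by ring
    have h2 : d ^ 2 = d * d := sq d
    have h3 : e ^ 2 = e * e := sq e
    rw [h1, sqmu_sq, h2, h3, sqmu_sq, sqmu_sq]
    rw [isMultiplicative_moebius.map_mul_of_coprime hde]
    push_cast
    rw [natCast_mul_natCast_cpow]
    ring
  · rw [sqmu_apply a b (m * n), if_neg hsq]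
    by_cases h1 : m.sqrt * m.sqrt = m
    · by_cases h2 : n.sqrt * n.sqrt = n
      · exfalso
        apply hsq
        have hX : m * n = (m.sqrt * n.sqrt) * (m.sqrt * n.sqrt) := by
          conv_lhs => rw [← h1, ← h2]
          ring
        rw [hX, Nat.sqrt_eq]
      · rw [sqmu_apply a b n, if_neg h2, mul_zero]
    · rw [sqmu_apply a b m, if_neg h1, zero_mul]

lemma sqmu_prime_pow (a b : ℂ) {p : ℕ} (hp : p.Prime) (j : ℕ) :
    sqmu a b (p ^ j) = if j = 0 then 1 else if j = 2 then -(p : ℂ) ^ (a + b) else 0 := by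
  rcases Nat.even_or_odd j with ⟨m, hm⟩ | hodd
  · subst hm
    have hpm : p ^ (m + m) = (p ^ m) * (p ^ m) := by rw [← pow_add]
    rw [hpm, sqmu_sq]
    rcases Nat.eq_zero_or_pos m with rfl | hmpos
    · simp
    rw [moebius_apply_prime_pow hp hmpos.ne']
    rcases eq_or_ne m 1 with rfl | hm1
    · norm_num [moebius_apply_prime hp]
    · rw [if_neg hm1]
      have : ¬ (m + m = 0) := by omega
      rw [if_neg this, if_neg (by omega)]
      push_cast
      ring
  · obtain ⟨m, hm⟩ := hodd
    subst hm
    rw [sqmu_apply, if_neg ?_, if_neg (by omega), if_neg (by omega)]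
    intro hK
    have hk0 : (p ^ (2 * m + 1)).sqrt ≠ 0 := by
      intro h0
      rw [h0] at hK
      exact (pow_ne_zero _ hp.pos.ne') hK.symm
    have hfac := congrArg (fun x => x.factorization p) hK
    simp only [Nat.factorization_mul hk0 hk0, hp.factorization_pow, Finsupp.coe_add,
      Pi.add_apply, Finsupp.single_eq_same] at hfac
    omega

/-! ### The main convolution identity -/

lemma conv_sqmu_prime_pow (f : ArithmeticFunction ℂ) (a b : ℂ) {p : ℕ} (hp : p.Prime)
    (e : ℕ) (he : 2 ≤ e) :
    (f * sqmu a b) (p ^ e) = f (p ^ e) - (p : ℂ) ^ (a + b) * f (p ^ (e - 2)) := by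
  rw [mul_apply_prime_pow _ _ hp]
  have hsub : ({e - 2, e} : Finset ℕ) ⊆ Finset.range (e + 1) := by
    intro x hx
    simp only [Finset.mem_insert, Finset.mem_singleton] at hx
    simp only [Finset.mem_range]
    omega
  rw [← Finset.sum_subset hsub ?_]
  · rw [Finset.sum_insert (by simp only [Finset.mem_singleton]; omega), Finset.sum_singleton]
    rw [sqmu_prime_pow a b hp, sqmu_prime_pow a b hp, Nat.sub_self]
    rw [if_neg (by omega : ¬ e - (e - 2) = 0), if_pos (by omega : e - (e - 2) = 2)]
    norm_num
    ring
  · intro x hx hnx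
    simp only [Finset.mem_range] at hx
    simp only [Finset.mem_insert, Finset.mem_singleton] at hnx
    push_neg at hnx
    rw [sqmu_prime_pow a b hp, if_neg (by omega), if_neg (by omega), mul_zero]

lemma main_conv (a b : ℂ) : (sig a).pmul (sig b) = quad a b * sqmu a b := by
  rw [ArithmeticFunction.IsMultiplicative.eq_iff_eq_on_prime_powers _
    ((isMult_sig a).pmul (isMult_sig b)) _ ((isMult_quad a b).mul (isMult_sqmu a b))]
  intro p e hp
  have hL : ((sig a).pmul (sig b)) (p ^ e) = Tfun ((p : ℂ) ^ a) ((p : ℂ) ^ b) e := by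
    rw [ArithmeticFunction.pmul_apply, sig_prime_pow a hp, sig_prime_pow b hp]; rfl
  match e with
  | 0 =>
    simp only [pow_zero]
    rw [((isMult_sig a).pmul (isMult_sig b)).map_one,
      ((isMult_quad a b).mul (isMult_sqmu a b)).map_one]
  | 1 =>
    rw [hL, mul_apply_prime_pow _ _ hp, Finset.sum_range_succ, Finset.sum_range_succ,
      Finset.sum_range_zero, zero_add, Nat.sub_self, Nat.sub_zero, pow_zero,
      (isMult_quad a b).map_one, (isMult_sqmu a b).map_one, one_mul, mul_one,
      sqmu_prime_pow a b hp, if_neg one_ne_zero, if_neg (by omega), zero_add,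
      quad_prime_pow a b hp, ← ST_one]
  | (e + 2) =>
    rw [hL, conv_sqmu_prime_pow _ a b hp (e + 2) (by omega)]
    have h2 : e + 2 - 2 = e := by omega
    rw [h2, quad_prime_pow a b hp, quad_prime_pow a b hp]
    have hpc : (p : ℂ) ≠ 0 := Nat.cast_ne_zero.mpr hp.pos.ne'
    rw [cpow_add _ _ hpc, key]
    ring

/-! ### L-series computations -/

open LSeries

lemma hasSum_zc {z : ℂ} (h : 1 < z.re) :
    LSeriesHasSum (fun n => zc n) z (riemannZeta z) := by
  have H := LSeriesHasSum_zeta h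
  have : (fun n => zc n) = fun n => ((ArithmeticFunction.zeta n : ℕ) : ℂ) := by
    funext n
    simp [zc, natCoe_apply]
  rw [this]
  exact H

lemma hasSum_dpow (w : ℂ) {z : ℂ} (h : 1 < (z - w).re) :
    LSeriesHasSum (fun n => dpow w n) z (riemannZeta (z - w)) := by
  have H := LSeriesHasSum_zeta (s := z - w) h
  have key : ∀ n : ℕ, term (fun n => dpow w n) z n
      = term (fun n => ((ArithmeticFunction.zeta n : ℕ) : ℂ)) (z - w) n := by
    intro n
    rcases eq_or_ne n 0 with rfl | hn
    · rw [term_zero, term_zero]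
    · rw [term_of_ne_zero hn, term_of_ne_zero hn, dpow_apply w hn]
      have hnc : (n : ℂ) ≠ 0 := Nat.cast_ne_zero.mpr hn
      have hz : (n : ℂ) ^ z ≠ 0 := by
        simp [Complex.cpow_eq_zero_iff, hnc]
      have hw : (n : ℂ) ^ w ≠ 0 := by
        simp [Complex.cpow_eq_zero_iff, hnc]
      rw [cpow_sub _ _ hnc]
      simp [ArithmeticFunction.zeta_apply, hn]
  unfold LSeriesHasSum at H ⊢
  rw [funext key]
  exact H

lemma hasSum_sqmu (a b : ℂ) {z : ℂ} (h : 1 < (2 * z - a - b).re) :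
    LSeriesHasSum (fun n => sqmu a b n) z (riemannZeta (2 * z - a - b))⁻¹ := by
  set w := 2 * z - a - b with hw
  have hmu : LSeriesHasSum (fun n => ((ArithmeticFunction.moebius n : ℤ) : ℂ)) w
      (riemannZeta w)⁻¹ := by
    have h1 : LSeries (fun n => ((ArithmeticFunction.moebius n : ℤ) : ℂ)) w
        = (riemannZeta w)⁻¹ := by
      have h2 := ArithmeticFunction.LSeries_zeta_mul_Lseries_moebius h
      rw [ArithmeticFunction.LSeries_zeta_eq_riemannZeta h] at h2
      exact eq_inv_of_mul_eq_one_left (by rwa [mul_comm] at h2)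
    exact h1 ▸ (ArithmeticFunction.LSeriesSummable_moebius_iff.mpr h).LSeriesHasSum
  have hinj : Function.Injective (fun k : ℕ => k * k) := fun x y hxy => by
    exact Nat.mul_self_inj.mp hxy
  have hsupp : ∀ x ∉ Set.range (fun k : ℕ => k * k), term (fun n => sqmu a b n) z x = 0 := by
    intro x hx
    rcases eq_or_ne x 0 with rfl | hx0
    · exact term_zero _ _
    · rw [term_of_ne_zero hx0, sqmu_apply, if_neg, zero_div]
      intro hc
      exact hx ⟨x.sqrt, hc⟩
  refine (Function.Injective.hasSum_iff hinj hsupp).mp ?_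
  have hcomp : ∀ k : ℕ, term (fun n => sqmu a b n) z (k * k)
      = term (fun n => ((ArithmeticFunction.moebius n : ℤ) : ℂ)) w k := by
    intro k
    rcases eq_or_ne k 0 with rfl | hk
    · rw [mul_zero, term_zero, term_zero]
    · have hkk : k * k ≠ 0 := mul_ne_zero hk hk
      rw [term_of_ne_zero hkk, term_of_ne_zero hk, sqmu_sq]
      have hkc : (k : ℂ) ≠ 0 := Nat.cast_ne_zero.mpr hk
      have hcast : ((k * k : ℕ) : ℂ) = (k : ℂ) ^ (2 : ℕ) := by push_cast; ring
      have h2z : ((k * k : ℕ) : ℂ) ^ z = (k : ℂ) ^ (2 * z) := by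
        rw [hcast, ← natCast_cpow_natCast_mul]
        norm_num
      rw [h2z]
      have hzz : (2 : ℂ) * z = w + (a + b) := by rw [hw]; ring
      rw [hzz, show ((k:ℂ) ^ (w + (a + b))) = (k:ℂ) ^ w * (k:ℂ) ^ (a + b) from cpow_add _ _ hkc]
      have hab : (k : ℂ) ^ (a + b) ≠ 0 := by
        simp [Complex.cpow_eq_zero_iff, hkc]
      have hwne : (k : ℂ) ^ w ≠ 0 := by
        simp [Complex.cpow_eq_zero_iff, hkc]
      field_simp
  have hfun : (term (fun n => sqmu a b n) z ∘ fun k : ℕ => k * k)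
      = fun k => term (fun n => ((ArithmeticFunction.moebius n : ℤ) : ℂ)) w k :=
    funext fun k => hcomp k
  rw [hfun]
  exact hmu

/-! ### Final assembly -/

lemma mainL (a b s₀ : ℂ) (h0 : 1 < s₀.re) (ha : 1 < (s₀ - a).re) (hb : 1 < (s₀ - b).re)
    (hab : 1 < (s₀ - a - b).re) (h2 : 1 < (2 * s₀ - a - b).re) :
    LSeriesHasSum (fun n => ((sig a).pmul (sig b)) n) s₀
      (riemannZeta s₀ * riemannZeta (s₀ - a) * riemannZeta (s₀ - b) *
        riemannZeta (s₀ - a - b) / riemannZeta (2 * s₀ - a - b)) := by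
  have hzeta := hasSum_zc h0
  have hda := hasSum_dpow a ha
  have hdb := hasSum_dpow b hb
  have hab' : 1 < (s₀ - (a + b)).re := by rw [← sub_sub]; exact hab
  have hdab := hasSum_dpow (a + b) hab' 
  have hquad := ArithmeticFunction.LSeriesHasSum_mul hdab
    (ArithmeticFunction.LSeriesHasSum_mul hda (ArithmeticFunction.LSeriesHasSum_mul hdb hzeta))
  have hsq := hasSum_sqmu a b h2
  have hfin := ArithmeticFunction.LSeriesHasSum_mul hquad hsq
  rw [main_conv a b]
  have hval : riemannZeta (s₀ - (a + b)) * (riemannZeta (s₀ - a) * (riemannZeta (s₀ - b) *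
        riemannZeta s₀)) * (riemannZeta (2 * s₀ - a - b))⁻¹
      = riemannZeta s₀ * riemannZeta (s₀ - a) * riemannZeta (s₀ - b) *
        riemannZeta (s₀ - a - b) / riemannZeta (2 * s₀ - a - b) := by
    rw [sub_sub, div_eq_mul_inv]; ring
  rw [← hval]
  exact hfin

lemma re_aux (z : ℂ) (t : ℝ) : (z + Complex.I * (t : ℂ)).re = z.re := by simp

end RamAux

theorem ramanujan_divisor_sum_identity' (r' r'' : ℝ) (s : ℂ) (hs : 1 < s.re) :
    HasSum
      (fun n : ℕ =>
        csigma (2 * Complex.I * (r' : ℂ)) (n + 1) *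
          csigma (-2 * Complex.I * (r'' : ℂ)) (n + 1) *
          ((n + 1 : ℕ) : ℂ) ^ (-(s + Complex.I * ((r' : ℂ) - (r'' : ℂ)))))
      (riemannZeta (s + Complex.I * ((r' : ℂ) - (r'' : ℂ))) *
        riemannZeta (s - Complex.I * ((r' : ℂ) + (r'' : ℂ))) *
        riemannZeta (s + Complex.I * ((r' : ℂ) + (r'' : ℂ))) *
        riemannZeta (s - Complex.I * ((r' : ℂ) - (r'' : ℂ))) /
        riemannZeta (2 * s)) := by
  have h0 : 1 < (s + Complex.I * ((r' : ℂ) - (r'' : ℂ))).re := by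
    have he : s + Complex.I * ((r' : ℂ) - (r'' : ℂ))
        = s + Complex.I * ((r' - r'' : ℝ) : ℂ) := by push_cast; ring
    rw [he, RamAux.re_aux]; exact hs
  have ha : 1 < (s + Complex.I * ((r' : ℂ) - (r'' : ℂ)) - 2 * Complex.I * (r' : ℂ)).re := by
    have he : s + Complex.I * ((r' : ℂ) - (r'' : ℂ)) - 2 * Complex.I * (r' : ℂ)
        = s + Complex.I * ((-r' - r'' : ℝ) : ℂ) := by push_cast; ring
    rw [he, RamAux.re_aux]; exact hs
  have hb : 1 < (s + Complex.I * ((r' : ℂ) - (r'' : ℂ)) - -2 * Complex.I * (r'' : ℂ)).re := by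
    have he : s + Complex.I * ((r' : ℂ) - (r'' : ℂ)) - -2 * Complex.I * (r'' : ℂ)
        = s + Complex.I * ((r' + r'' : ℝ) : ℂ) := by push_cast; ring
    rw [he, RamAux.re_aux]; exact hs
  have hab : 1 < (s + Complex.I * ((r' : ℂ) - (r'' : ℂ)) - 2 * Complex.I * (r' : ℂ)
      - -2 * Complex.I * (r'' : ℂ)).re := by
    have he : s + Complex.I * ((r' : ℂ) - (r'' : ℂ)) - 2 * Complex.I * (r' : ℂ)
        - -2 * Complex.I * (r'' : ℂ) = s + Complex.I * ((r'' - r' : ℝ) : ℂ) := by push_cast; ring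
    rw [he, RamAux.re_aux]; exact hs
  have h2 : 1 < (2 * (s + Complex.I * ((r' : ℂ) - (r'' : ℂ))) - 2 * Complex.I * (r' : ℂ)
      - -2 * Complex.I * (r'' : ℂ)).re := by
    have he : 2 * (s + Complex.I * ((r' : ℂ) - (r'' : ℂ))) - 2 * Complex.I * (r' : ℂ)
        - -2 * Complex.I * (r'' : ℂ) = 2 * s := by ring
    rw [he]
    have h2re : (2 * s).re = 2 * s.re := by simp [Complex.mul_re]
    rw [h2re]; linarith
  have key := RamAux.mainL (2 * Complex.I * (r' : ℂ)) (-2 * Complex.I * (r'' : ℂ))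
    (s + Complex.I * ((r' : ℂ) - (r'' : ℂ))) h0 ha hb hab h2
  rw [show s + Complex.I * ((r' : ℂ) - (r'' : ℂ)) - 2 * Complex.I * (r' : ℂ)
      = s - Complex.I * ((r' : ℂ) + (r'' : ℂ)) by ring] at key
  rw [show s + Complex.I * ((r' : ℂ) - (r'' : ℂ)) - -2 * Complex.I * (r'' : ℂ)
      = s + Complex.I * ((r' : ℂ) + (r'' : ℂ)) by ring] at key
  rw [show s - Complex.I * ((r' : ℂ) + (r'' : ℂ)) - -2 * Complex.I * (r'' : ℂ)
      = s - Complex.I * ((r' : ℂ) - (r'' : ℂ)) by ring] at key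
  rw [show 2 * (s + Complex.I * ((r' : ℂ) - (r'' : ℂ))) - 2 * Complex.I * (r' : ℂ)
      - -2 * Complex.I * (r'' : ℂ) = 2 * s by ring] at key
  have hsupp : ∀ x ∉ Set.range (fun n : ℕ => n + 1),
      LSeries.term (fun n => ((RamAux.sig (2 * Complex.I * (r' : ℂ))).pmul
        (RamAux.sig (-2 * Complex.I * (r'' : ℂ)))) n)
        (s + Complex.I * ((r' : ℂ) - (r'' : ℂ))) x = 0 := by
    intro x hx
    match x with
    | 0 => exact LSeries.term_zero _ _
    | n + 1 => exact absurd ⟨n, rfl⟩ hx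
  have H2 := (Function.Injective.hasSum_iff (add_left_injective 1) hsupp).mpr key
  have hfun : (LSeries.term (fun n => ((RamAux.sig (2 * Complex.I * (r' : ℂ))).pmul
        (RamAux.sig (-2 * Complex.I * (r'' : ℂ)))) n)
        (s + Complex.I * ((r' : ℂ) - (r'' : ℂ))) ∘ fun n : ℕ => n + 1)
      = fun n : ℕ => csigma (2 * Complex.I * (r' : ℂ)) (n + 1) *
          csigma (-2 * Complex.I * (r'' : ℂ)) (n + 1) *
          ((n + 1 : ℕ) : ℂ) ^ (-(s + Complex.I * ((r' : ℂ) - (r'' : ℂ)))) := by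
    funext n
    simp only [Function.comp_apply]
    rw [LSeries.term_of_ne_zero (Nat.succ_ne_zero n), ArithmeticFunction.pmul_apply,
      RamAux.sig_eq_csigma, RamAux.sig_eq_csigma, cpow_neg, div_eq_mul_inv]
  rw [hfun] at H2
  exact H2

theorem ramanujan_divisor_sum_identity (r' r'' : ℝ) (s : ℂ) (hs : 1 < s.re) :
    HasSum
      (fun n : ℕ =>
        csigma (2 * Complex.I * (r' : ℂ)) (n + 1) *
          csigma (-2 * Complex.I * (r'' : ℂ)) (n + 1) *
          ((n + 1 : ℕ) : ℂ) ^ (-(s + Complex.I * ((r' : ℂ) - (r'' : ℂ)))))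
      (riemannZeta (s + Complex.I * ((r' : ℂ) - (r'' : ℂ))) *
        riemannZeta (s - Complex.I * ((r' : ℂ) + (r'' : ℂ))) *
        riemannZeta (s + Complex.I * ((r' : ℂ) + (r'' : ℂ))) *
        riemannZeta (s - Complex.I * ((r' : ℂ) - (r'' : ℂ))) /
        riemannZeta (2 * s)) := by
  exact ramanujan_divisor_sum_identity' r' r'' s hs
end

section
/- There exists a constant C > 0 such that for every real r ≥ 2, the logarithmic derivative of the Gamma function satisfies ‖(Γ'/Γ)(1/2 + ir) − log r‖ ≤ C, where Γ'/Γ denotes logDeriv Γ, i.e., the derivative of Γ divided by Γ, evaluated at 1/2 + ir, and log r is viewed as a complex number. -/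
/-!
Euler's limit `Γ(s) = lim n^s n! / (s (s+1) ⋯ (s+n))` holds uniformly on every strip
`a ≤ Re s ≤ b` with `a > 0`: in
`Γ(s) - GammaSeq s n = ∫₀^∞ (e^{-t} - (1 - t/n)^n 𝟙_{t ≤ n}) t^{s-1} dt` the kernel is
nonnegative, so the error at `s` is at most the sum of the errors at the real points `a` and `b`.
Hence the logarithmic derivatives converge too: `Γ'/Γ(s) = lim (log n - ∑_{j ≤ n} 1/(s+j))`.
For `s = σ + ir` with `0 < σ ≤ 1`, split this sum at `N = ⌈|r|⌉`: the first `N` terms are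
`O(1/r)` each, the later ones differ from `1/(j+1)` by `O(r/j²)`, and what is left is
`log n - H_n + H_N = log r + O(1)`.
-/

open Complex Filter MeasureTheory Set Topology

lemma abs_log_sub_harmonic_le_one {n : ℕ} (hn : n ≠ 0) : |Real.log n - harmonic n| ≤ 1 := by
  have hlow : Real.log n ≤ harmonic n :=
    (Real.log_le_log (by positivity) (by push_cast; linarith) :
      Real.log n ≤ Real.log ((n + 1 : ℕ) : ℝ)).trans (log_add_one_le_harmonic n)
  rw [abs_le]
  constructor <;> linarith [harmonic_le_one_add_log n]

lemma abs_harmonic_ceil_sub_log_le {t : ℝ} (ht : 1 ≤ t) :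
    |(harmonic ⌈t⌉₊ : ℝ) - Real.log t| ≤ 2 := by
  have hN : t ≤ ⌈t⌉₊ := Nat.le_ceil t
  have hN' : (⌈t⌉₊ : ℝ) < t + 1 := Nat.ceil_lt_add_one (by linarith)
  have hlow : Real.log t ≤ harmonic ⌈t⌉₊ :=
    (Real.log_le_log (by linarith) (by push_cast; linarith) :
      Real.log t ≤ Real.log ((⌈t⌉₊ + 1 : ℕ) : ℝ)).trans (log_add_one_le_harmonic ⌈t⌉₊)
  have hup : Real.log ⌈t⌉₊ ≤ Real.log 2 + Real.log t := by
    rw [← Real.log_mul two_ne_zero (by positivity)]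
    exact Real.log_le_log (by linarith) (by linarith)
  rw [abs_le]
  constructor <;> linarith [harmonic_le_one_add_log ⌈t⌉₊, Real.log_two_lt_d9]

lemma sum_Ico_inv_add_one_sq_le {N : ℕ} (hN : N ≠ 0) (n : ℕ) :
    ∑ j ∈ Finset.Ico N n, (((j : ℝ) + 1) ^ 2)⁻¹ ≤ (N : ℝ)⁻¹ := by
  rcases le_total N n with h | h
  · calc ∑ j ∈ Finset.Ico N n, (((j : ℝ) + 1) ^ 2)⁻¹
        ≤ ∑ j ∈ Finset.Ico N n, (-((j + 1 : ℕ) : ℝ)⁻¹ - -(j : ℝ)⁻¹) := by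
          refine Finset.sum_le_sum fun j hj ↦ ?_
          have hj : (0 : ℝ) < j := by
            exact_mod_cast (Nat.pos_of_ne_zero hN).trans_le (Finset.mem_Ico.1 hj).1
          rw [Nat.cast_add_one, neg_sub_neg, inv_sub_inv hj.ne' (by positivity),
            add_sub_cancel_left, one_div]
          gcongr
          nlinarith
      _ = (N : ℝ)⁻¹ - (n : ℝ)⁻¹ := by
          rw [Finset.sum_Ico_sub (fun i : ℕ ↦ -(i : ℝ)⁻¹) h]
          ring
      _ ≤ (N : ℝ)⁻¹ := sub_le_self _ (by positivity)
  · rw [Finset.Ico_eq_empty_of_le h, Finset.sum_empty]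
    positivity

namespace Complex

noncomputable def gammaSeqDefect (n : ℕ) (t : ℝ) : ℝ :=
  Real.exp (-t) - (Ioc 0 (n : ℝ)).indicator (fun t ↦ (1 - t / n) ^ n) t

lemma gammaSeqDefect_nonneg (n : ℕ) (t : ℝ) : 0 ≤ gammaSeqDefect n t := by
  rw [gammaSeqDefect, sub_nonneg]
  by_cases h : t ∈ Ioc 0 (n : ℝ)
  · rw [indicator_of_mem h]
    exact Real.one_sub_div_pow_le_exp_neg h.2
  · rw [indicator_of_notMem h]
    positivity

lemma ofReal_gammaSeqDefect_mul_cpow (n : ℕ) (s : ℂ) (t : ℝ) :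
    (gammaSeqDefect n t : ℂ) * (t : ℂ) ^ (s - 1) = Real.exp (-t) * (t : ℂ) ^ (s - 1) -
      (Ioc 0 (n : ℝ)).indicator (fun t : ℝ ↦ ((1 - t / n) ^ n : ℝ) * (t : ℂ) ^ (s - 1)) t := by
  by_cases h : t ∈ Ioc 0 (n : ℝ) <;> simp [gammaSeqDefect, h, sub_mul]

lemma integrableOn_indicator_mul_cpow (n : ℕ) {s : ℂ} (hs : 0 < s.re) :
    IntegrableOn ((Ioc 0 (n : ℝ)).indicator fun t : ℝ ↦ ((1 - t / n) ^ n : ℝ) * (t : ℂ) ^ (s - 1))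
      (Ioi 0) := by
  rw [IntegrableOn, integrable_indicator_iff measurableSet_Ioc, IntegrableOn,
    Measure.restrict_restrict_of_subset Ioc_subset_Ioi_self, ← IntegrableOn,
    ← intervalIntegrable_iff_integrableOn_Ioc_of_le n.cast_nonneg]
  refine IntervalIntegrable.continuousOn_mul (intervalIntegral.intervalIntegrable_cpow' ?_) ?_
  · simpa using hs
  · fun_prop

lemma GammaSeq_eq_integral_indicator_mul_cpow {s : ℂ} (hs : 0 < s.re) {n : ℕ} (hn : n ≠ 0) :
    GammaSeq s n = ∫ t in Ioi 0,
      (Ioc 0 (n : ℝ)).indicator (fun t : ℝ ↦ ((1 - t / n) ^ n : ℝ) * (t : ℂ) ^ (s - 1)) t := by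
  rw [GammaSeq_eq_approx_Gamma_integral hs hn, integral_indicator measurableSet_Ioc,
    intervalIntegral.integral_of_le n.cast_nonneg,
    Measure.restrict_restrict_of_subset Ioc_subset_Ioi_self]

lemma Gamma_sub_GammaSeq_eq_integral {s : ℂ} (hs : 0 < s.re) {n : ℕ} (hn : n ≠ 0) :
    Gamma s - GammaSeq s n = ∫ t in Ioi 0, (gammaSeqDefect n t : ℂ) * (t : ℂ) ^ (s - 1) := by
  simp only [Gamma_eq_integral hs, GammaIntegral, GammaSeq_eq_integral_indicator_mul_cpow hs hn,
    ofReal_gammaSeqDefect_mul_cpow,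
    integral_sub (GammaIntegral_convergent hs) (integrableOn_indicator_mul_cpow n hs)]

lemma integrableOn_gammaSeqDefect_mul_cpow (n : ℕ) {s : ℂ} (hs : 0 < s.re) :
    IntegrableOn (fun t : ℝ ↦ (gammaSeqDefect n t : ℂ) * (t : ℂ) ^ (s - 1)) (Ioi 0) := by
  convert (GammaIntegral_convergent hs).sub (integrableOn_indicator_mul_cpow n hs) using 1
  ext t
  exact ofReal_gammaSeqDefect_mul_cpow n s t

lemma norm_gammaSeqDefect_mul_cpow (n : ℕ) (s : ℂ) {t : ℝ} (ht : 0 < t) :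
    ‖(gammaSeqDefect n t : ℂ) * (t : ℂ) ^ (s - 1)‖ = gammaSeqDefect n t * t ^ (s.re - 1) := by
  rw [norm_mul, norm_real, norm_cpow_eq_rpow_re_of_pos ht, Real.norm_of_nonneg
    (gammaSeqDefect_nonneg n t), sub_re, one_re]

lemma integral_gammaSeqDefect_mul_rpow {x : ℝ} (hx : 0 < x) {n : ℕ} (hn : n ≠ 0) :
    ∫ t in Ioi 0, gammaSeqDefect n t * t ^ (x - 1) = ‖Gamma x - GammaSeq x n‖ := by
  have hnonneg : 0 ≤ ∫ t in Ioi 0, gammaSeqDefect n t * t ^ (x - 1) :=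
    setIntegral_nonneg measurableSet_Ioi fun t ht ↦
      mul_nonneg (gammaSeqDefect_nonneg n t) (Real.rpow_nonneg (le_of_lt ht) _)
  rw [Gamma_sub_GammaSeq_eq_integral (by simpa using hx) hn, ← Complex.norm_of_nonneg hnonneg,
    ← integral_complex_ofReal]
  congr 1
  refine setIntegral_congr_fun measurableSet_Ioi fun t ht ↦ ?_
  simp only [ofReal_mul, ofReal_cpow (le_of_lt ht), ofReal_sub, ofReal_one]

lemma integrableOn_gammaSeqDefect_mul_rpow (n : ℕ) {x : ℝ} (hx : 0 < x) :
    IntegrableOn (fun t ↦ gammaSeqDefect n t * t ^ (x - 1)) (Ioi 0) := by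
  refine IntegrableOn.congr_fun
    (integrableOn_gammaSeqDefect_mul_cpow n (s := x) (by simpa using hx)).norm
    (fun t ht ↦ ?_) measurableSet_Ioi
  simp only [norm_gammaSeqDefect_mul_cpow n _ ht, ofReal_re]

lemma norm_Gamma_sub_GammaSeq_le {a b : ℝ} (ha : 0 < a) {s : ℂ} (has : a ≤ s.re) (hsb : s.re ≤ b)
    {n : ℕ} (hn : n ≠ 0) :
    ‖Gamma s - GammaSeq s n‖ ≤ ‖Gamma a - GammaSeq a n‖ + ‖Gamma b - GammaSeq b n‖ := by
  have hb : 0 < b := ha.trans_le (has.trans hsb)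
  rw [Gamma_sub_GammaSeq_eq_integral (ha.trans_le has) hn,
    ← integral_gammaSeqDefect_mul_rpow ha hn, ← integral_gammaSeqDefect_mul_rpow hb hn,
    ← integral_add
      (integrableOn_gammaSeqDefect_mul_rpow n ha) (integrableOn_gammaSeqDefect_mul_rpow n hb)]
  refine (norm_integral_le_integral_norm _).trans (setIntegral_mono_on
    (integrableOn_gammaSeqDefect_mul_cpow n (ha.trans_le has)).norm
    ((integrableOn_gammaSeqDefect_mul_rpow n ha).add (integrableOn_gammaSeqDefect_mul_rpow n hb))
    measurableSet_Ioi fun t (ht : 0 < t) ↦ ?_)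
  rw [norm_gammaSeqDefect_mul_cpow n s ht, ← mul_add]
  refine mul_le_mul_of_nonneg_left ?_ (gammaSeqDefect_nonneg n t)
  rcases le_total 1 t with h | h
  · exact (Real.rpow_le_rpow_of_exponent_le h (by linarith)).trans
      (le_add_of_nonneg_left (Real.rpow_nonneg ht.le _))
  · exact (Real.rpow_le_rpow_of_exponent_ge ht h (by linarith)).trans
      (le_add_of_nonneg_right (Real.rpow_nonneg ht.le _))

theorem tendstoUniformlyOn_GammaSeq {a : ℝ} (ha : 0 < a) (b : ℝ) :
    TendstoUniformlyOn (fun n s ↦ GammaSeq s n) Gamma atTop {s | a ≤ s.re ∧ s.re ≤ b} := by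
  have hlim (x : ℝ) : Tendsto (fun n : ℕ ↦ ‖Gamma x - GammaSeq x n‖) atTop (𝓝 0) := by
    simpa only [norm_sub_rev] using tendsto_iff_norm_sub_tendsto_zero.1 (GammaSeq_tendsto_Gamma x)
  rw [Metric.tendstoUniformlyOn_iff]
  intro ε hε
  filter_upwards [(by simpa using (hlim a).add (hlim b) :
      Tendsto (fun n : ℕ ↦ ‖Gamma a - GammaSeq a n‖ + ‖Gamma b - GammaSeq b n‖) atTop
        (𝓝 0)).eventually (gt_mem_nhds hε), eventually_ne_atTop 0] with n hsmall hn s hs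
  exact (dist_eq_norm _ _).trans_le (norm_Gamma_sub_GammaSeq_le ha hs.1 hs.2 hn) |>.trans_lt hsmall

lemma differentiableAt_GammaSeq {n : ℕ} (hn : n ≠ 0) {s : ℂ} (hs : ∀ m : ℕ, s + m ≠ 0) :
    DifferentiableAt ℂ (GammaSeq · n) s := by
  have hn' : (n : ℂ) ≠ 0 := Nat.cast_ne_zero.2 hn
  unfold GammaSeq
  refine DifferentiableAt.div ?_ ?_ (Finset.prod_ne_zero_iff.2 fun j _ ↦ hs j)
  · exact (differentiableAt_id.const_cpow (Or.inl hn')).mul_const _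
  · exact DifferentiableAt.fun_finsetProd fun j _ ↦ differentiableAt_id.add_const _

lemma logDeriv_GammaSeq {n : ℕ} (hn : n ≠ 0) {s : ℂ} (hs : ∀ m : ℕ, s + m ≠ 0) :
    logDeriv (GammaSeq · n) s = Real.log n - ∑ j ∈ Finset.range (n + 1), (s + j)⁻¹ := by
  have hn' : (n : ℂ) ≠ 0 := Nat.cast_ne_zero.2 hn
  have hfac : (n.factorial : ℂ) ≠ 0 := Nat.cast_ne_zero.2 n.factorial_ne_zero
  have hpow : HasDerivAt (fun z : ℂ ↦ (n : ℂ) ^ z) ((n : ℂ) ^ s * log n) s := by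
    simpa using (hasDerivAt_id s).const_cpow (Or.inl hn')
  have hlin (j : ℕ) : HasDerivAt (fun z : ℂ ↦ z + j) 1 s := (hasDerivAt_id s).add_const _
  unfold GammaSeq
  rw [logDeriv_div (f := fun z ↦ (n : ℂ) ^ z * n.factorial)
      (g := fun z ↦ ∏ j ∈ Finset.range (n + 1), (z + j)) s
      (mul_ne_zero (cpow_ne_zero_iff.2 (Or.inl hn')) hfac)
      (Finset.prod_ne_zero_iff.2 fun j _ ↦ hs j) (hpow.differentiableAt.mul_const _)
      (DifferentiableAt.fun_finsetProd fun j _ ↦ (hlin j).differentiableAt),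
    logDeriv_mul_const s _ hfac, logDeriv_prod (fun j _ ↦ hs j)
      (fun j _ ↦ (hlin j).differentiableAt), logDeriv_apply, hpow.deriv,
    mul_div_cancel_left₀ _ (cpow_ne_zero_iff.2 (Or.inl hn')), ofReal_log n.cast_nonneg]
  simp only [logDeriv_apply, (hlin _).deriv, one_div, ofReal_natCast]

theorem tendsto_log_sub_sum_inv_logDeriv_Gamma {s : ℂ} (hs : 0 < s.re) :
    Tendsto (fun n : ℕ ↦ (Real.log n : ℂ) - ∑ j ∈ Finset.range (n + 1), (s + j)⁻¹) atTop
      (𝓝 (logDeriv Gamma s)) := by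
  set U : Set ℂ := {z | s.re / 2 < z.re ∧ z.re < s.re + 1}
  have hU : IsOpen U := (isOpen_lt continuous_const continuous_re).inter
    (isOpen_lt continuous_re continuous_const)
  have hsU : s ∈ U := ⟨by linarith, by linarith⟩
  have hne {z : ℂ} (hz : 0 < z.re) (m : ℕ) : z + m ≠ 0 := fun h ↦
    (add_pos_of_pos_of_nonneg hz m.cast_nonneg).ne' (by simpa using congrArg re h)
  have hunif : TendstoLocallyUniformlyOn (fun n s ↦ GammaSeq s n) Gamma atTop U :=
    ((tendstoUniformlyOn_GammaSeq (half_pos hs) (s.re + 1)).mono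
      fun z hz ↦ ⟨hz.1.le, hz.2.le⟩).tendstoLocallyUniformlyOn
  have hdiff : ∀ᶠ n : ℕ in atTop, DifferentiableOn ℂ (GammaSeq · n) U := by
    filter_upwards [eventually_ne_atTop 0] with n hn z hz
    exact (differentiableAt_GammaSeq hn (hne (by linarith [hz.1]))).differentiableWithinAt
  refine (logDeriv_tendsto hU hsU hunif hdiff (Gamma_ne_zero_of_re_pos hs)).congr' ?_
  filter_upwards [eventually_ne_atTop 0] with n hn
  exact logDeriv_GammaSeq hn (hne hs)

lemma norm_inv_add_ofReal_le {s : ℂ} (hs : s.im ≠ 0) (x : ℝ) : ‖(s + x)⁻¹‖ ≤ |s.im|⁻¹ := by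
  rw [norm_inv]
  exact inv_anti₀ (abs_pos.2 hs) (by simpa using abs_im_le_norm (s + x))

lemma norm_inv_sub_inv_add_le {s : ℂ} (hs : 0 ≤ s.re) (x : ℝ) (hx : 0 < x) :
    ‖(x : ℂ)⁻¹ - (s + x)⁻¹‖ ≤ ‖s‖ / x ^ 2 := by
  have hsx : x ≤ ‖s + x‖ := by
    refine le_trans ?_ (re_le_norm (s + x))
    simpa using hs
  have hsx0 : s + x ≠ 0 := norm_pos_iff.1 (hx.trans_le hsx)
  rw [inv_sub_inv (ofReal_ne_zero.2 hx.ne') hsx0, add_sub_cancel_right, norm_div, norm_mul,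
    norm_real, Real.norm_of_nonneg hx.le, sq]
  gcongr

lemma sum_range_succ_inv_add_eq (s : ℂ) {N n : ℕ} (h : N ≤ n) :
    ∑ j ∈ Finset.range (n + 1), (s + j)⁻¹ = s⁻¹ + ((harmonic n - harmonic N : ℝ) : ℂ) +
      ∑ j ∈ Finset.range N, (s + (j + 1))⁻¹ -
      ∑ j ∈ Finset.Ico N n, (((j : ℂ) + 1)⁻¹ - (s + (j + 1))⁻¹) := by
  have hharm : ((harmonic n - harmonic N : ℝ) : ℂ) = ∑ j ∈ Finset.Ico N n, ((j : ℂ) + 1)⁻¹ := by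
    rw [harmonic, harmonic, ← Finset.sum_range_add_sum_Ico _ h]
    push_cast
    ring
  rw [Finset.sum_range_succ', ← Finset.sum_range_add_sum_Ico _ h, hharm, Finset.sum_sub_distrib]
  push_cast
  ring

lemma norm_log_sub_sum_inv_add_sub_log_le {s : ℂ} (hs₀ : 0 ≤ s.re) (hs₁ : s.re ≤ 1)
    (him : 2 ≤ |s.im|) {n : ℕ} (hn : ⌈|s.im|⌉₊ ≤ n) :
    ‖(Real.log n : ℂ) - ∑ j ∈ Finset.range (n + 1), (s + j)⁻¹ - Real.log |s.im|‖ ≤ 7 := by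
  set t := |s.im|
  set N := ⌈t⌉₊
  have ht : 0 < t := by linarith
  have hNt : t ≤ N := Nat.le_ceil t
  have hNt' : (N : ℝ) ≤ t + 1 := (Nat.ceil_lt_add_one ht.le).le
  have hN : N ≠ 0 := by positivity
  have hsim : s.im ≠ 0 := abs_pos.1 ht
  have hA : ‖(Real.log n : ℂ) - (harmonic n : ℝ)‖ ≤ 1 := by
    rw [← ofReal_sub, norm_real, Real.norm_eq_abs]
    exact abs_log_sub_harmonic_le_one (by omega)
  have hB : ‖((harmonic N : ℝ) : ℂ) - Real.log t‖ ≤ 2 := by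
    rw [← ofReal_sub, norm_real, Real.norm_eq_abs]
    exact abs_harmonic_ceil_sub_log_le (by linarith)
  have hC : ‖s⁻¹‖ ≤ 1 / 2 := by
    have := norm_inv_add_ofReal_le hsim 0
    rw [ofReal_zero, add_zero] at this
    exact this.trans (by rw [one_div]; exact inv_anti₀ two_pos him)
  have hD : ‖∑ j ∈ Finset.range N, (s + (j + 1))⁻¹‖ ≤ 3 / 2 := by
    calc _ ≤ ∑ j ∈ Finset.range N, t⁻¹ := norm_sum_le_of_le _ fun j _ ↦ by
            simpa using norm_inv_add_ofReal_le hsim (j + 1)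
      _ = N / t := by rw [Finset.sum_const, Finset.card_range, nsmul_eq_mul, div_eq_mul_inv]
      _ ≤ 3 / 2 := by rw [div_le_iff₀ ht]; linarith
  have hE : ‖∑ j ∈ Finset.Ico N n, (((j : ℂ) + 1)⁻¹ - (s + (j + 1))⁻¹)‖ ≤ 3 / 2 := by
    have hs : ‖s‖ ≤ 1 + t := (norm_le_abs_re_add_abs_im s).trans
      (by rw [abs_of_nonneg hs₀]; linarith)
    calc _ ≤ ∑ j ∈ Finset.Ico N n, ‖s‖ * (((j : ℝ) + 1) ^ 2)⁻¹ :=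
          norm_sum_le_of_le _ fun j _ ↦ by
            simpa [div_eq_mul_inv] using norm_inv_sub_inv_add_le hs₀ (j + 1) (by positivity)
      _ ≤ ‖s‖ * (N : ℝ)⁻¹ := by
            rw [← Finset.mul_sum]
            exact mul_le_mul_of_nonneg_left (sum_Ico_inv_add_one_sq_le hN n) (norm_nonneg s)
      _ ≤ (1 + t) * t⁻¹ := by gcongr
      _ ≤ 3 / 2 := by rw [← div_eq_mul_inv, div_le_iff₀ ht]; linarith
  rw [sum_range_succ_inv_add_eq s hn]
  calc _ = ‖((Real.log n : ℂ) - (harmonic n : ℝ)) + (((harmonic N : ℝ) : ℂ) - Real.log t) - s⁻¹ -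
        ∑ j ∈ Finset.range N, (s + (j + 1))⁻¹ +
        ∑ j ∈ Finset.Ico N n, (((j : ℂ) + 1)⁻¹ - (s + (j + 1))⁻¹)‖ := by
          congr 1
          push_cast
          ring
    _ ≤ 1 + 2 + 1 / 2 + 3 / 2 + 3 / 2 := by
      refine norm_add_le_of_le (norm_sub_le_of_le (norm_sub_le_of_le
        (norm_add_le_of_le hA hB) hC) hD) hE
    _ ≤ 7 := by norm_num

theorem norm_logDeriv_Gamma_sub_log_abs_im_le {s : ℂ} (hs₀ : 0 < s.re) (hs₁ : s.re ≤ 1)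
    (him : 2 ≤ |s.im|) : ‖logDeriv Gamma s - Real.log |s.im|‖ ≤ 7 := by
  refine le_of_tendsto ((tendsto_log_sub_sum_inv_logDeriv_Gamma hs₀).sub_const _).norm ?_
  filter_upwards [eventually_ge_atTop ⌈|s.im|⌉₊] with n hn
  exact norm_log_sub_sum_inv_add_sub_log_le hs₀.le hs₁ him hn

end Complex

theorem logDeriv_gamma_half_line :
    ∃ C > (0 : ℝ), ∀ r : ℝ, 2 ≤ r →
      ‖logDeriv Complex.Gamma (1 / 2 + Complex.I * (r : ℂ)) -
          (Real.log r : ℂ)‖ ≤ C := by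
  refine ⟨7, by norm_num, fun r hr ↦ ?_⟩
  have him : (1 / 2 + I * (r : ℂ)).im = r := by simp
  have hbound := norm_logDeriv_Gamma_sub_log_abs_im_le (s := 1 / 2 + I * r) (by norm_num)
    (by norm_num) (by rwa [him, abs_of_nonneg (by linarith)])
  rwa [him, abs_of_nonneg (by linarith)] at hbound
end

section
/- Let λ : ℕ≥1 → ℂ satisfy λ(1) = 1 and the Hecke multiplicativity relation λ(m)λ(n) = ∑_{d ∣ gcd(m,n)} λ(mn/d²) for all m, n ≥ 1, and suppose there exist constants A > 0 and θ ≥ 0 with |λ(n)| ≤ A n^θ for all n. Let w ∈ ℂ and s ∈ ℂ with Re(s) > 1 + θ + max(Re w, 0). Then the series L(s) := ∑_{n≥1} λ(n) n^{−s}, L(s − w) := ∑_{n≥1} λ(n) n^{−(s−w)}, and ∑_{n≥1} λ(n) σ_w(n) n^{−s} all converge absolutely, ζ(2s − w) ≠ 0, and ∑_{n=1}^∞ λ(n) σ_w(n) n^{−s} = L(s) · L(s − w) / ζ(2s − w). -/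
/-!
In Dirichlet-convolution form the Hecke relation reads `a ⍟ (a · n^w) = Z_w ⍟ (a · σ_w)`, where
`Z_w = squareCpow w` is `k^w` at `k²` and vanishes off the squares: at `N` both sides equal
`∑_{d² ∣ N} d^w a(N/d²) σ_w(N/d²)`, because the pairs `mn = N` with `d ∣ gcd(m, n)` are exactly
the `(dm', dn')` with `m'n' = N/d²`. The L-series of `Z_w` at `s` is `ζ(2s - w)` and that of
`a · n^w` is `L(s - w)`, so taking L-series of both sides gives the factorization. Absolute
convergence of `∑ a(n) σ_w(n) n^{-s}` follows from `|a(n)| ≤ A n^θ` and `σ_w = n^w ⍟ 1`.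
-/

open Complex Filter Topology

open LSeries
open scoped LSeries.notation

lemma LSeries.term_succ (f : ℕ → ℂ) (s : ℂ) (n : ℕ) :
    term f s (n + 1) = f (n + 1) * ((n + 1 : ℕ) : ℂ) ^ (-s) := by
  rw [term_of_ne_zero n.succ_ne_zero, cpow_neg, div_eq_mul_inv]

lemma LSeriesSummable.summable_norm_succ {f : ℕ → ℂ} {s : ℂ} (hf : LSeriesSummable f s) :
    Summable fun n : ℕ => ‖f (n + 1) * ((n + 1 : ℕ) : ℂ) ^ (-s)‖ := by
  simpa only [term_succ] using (summable_nat_add_iff 1).2 hf.norm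

lemma LSeries_eq_tsum_succ (f : ℕ → ℂ) (s : ℂ) :
    LSeries f s = ∑' n : ℕ, f (n + 1) * ((n + 1 : ℕ) : ℂ) ^ (-s) := by
  rw [LSeries, ← Nat.succ_injective.tsum_eq]
  · simp only [Nat.succ_eq_add_one, term_succ]
  · rintro (_ | n) h
    · exact absurd (term_zero f s) h
    · exact ⟨n, rfl⟩

lemma LSeries.term_mul_cpow (f : ℕ → ℂ) (w s : ℂ) :
    term (fun n => f n * (n : ℂ) ^ w) s = term f (s - w) := by
  ext (_ | n)
  · simp
  · rw [term_of_ne_zero n.succ_ne_zero, term_of_ne_zero n.succ_ne_zero,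
      cpow_sub _ _ (Nat.cast_ne_zero.2 n.succ_ne_zero), div_div_eq_mul_div]

lemma LSeriesSummable_mul_cpow_iff {f : ℕ → ℂ} {w s : ℂ} :
    LSeriesSummable (fun n => f n * (n : ℂ) ^ w) s ↔ LSeriesSummable f (s - w) := by
  rw [LSeriesSummable, LSeriesSummable, term_mul_cpow]

lemma LSeries_mul_cpow (f : ℕ → ℂ) (w s : ℂ) :
    LSeries (fun n => f n * (n : ℂ) ^ w) s = LSeries f (s - w) := by
  rw [LSeries, LSeries, term_mul_cpow]

lemma LSeriesSummable.mul_of_norm_le_rpow {f g : ℕ → ℂ} {A θ : ℝ} {s : ℂ}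
    (hf : ∀ n ≠ 0, ‖f n‖ ≤ A * (n : ℝ) ^ θ) (hg : LSeriesSummable g (s - θ)) :
    LSeriesSummable (fun n => f n * g n) s := by
  refine Summable.of_norm_bounded (hg.norm.mul_left A) fun n => ?_
  rcases eq_or_ne n 0 with rfl | hn
  · simp
  have hn' : (0 : ℝ) < n := Nat.cast_pos.2 (Nat.pos_of_ne_zero hn)
  rw [norm_term_eq, norm_term_eq, if_neg hn, if_neg hn, norm_mul, sub_re, ofReal_re,
    Real.rpow_sub hn']
  calc ‖f n‖ * ‖g n‖ / n ^ s.re ≤ A * n ^ θ * ‖g n‖ / n ^ s.re := by gcongr; exact hf n hn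
    _ = A * (‖g n‖ / (n ^ s.re / n ^ θ)) := by field_simp

lemma csigma_eq_convolution (w : ℂ) : csigma w = (fun n : ℕ => (n : ℂ) ^ w) ⍟ 1 := by
  ext n
  simp [convolution_def, csigma, Nat.sum_divisorsAntidiagonal (fun d _ => (d : ℂ) ^ w)]

lemma LSeriesSummable_csigma {w s : ℂ} (hs : 1 < s.re) (hsw : 1 < (s - w).re) :
    LSeriesSummable (csigma w) s := by
  rw [csigma_eq_convolution]
  refine LSeriesSummable.convolution ?_ (LSeriesSummable_one_iff.2 hs)
  simpa using LSeriesSummable_mul_cpow_iff (f := 1) |>.2 (LSeriesSummable_one_iff.2 hsw)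

noncomputable def squareCpow (w : ℂ) (n : ℕ) : ℂ := ∑ k ∈ n.divisors with k ^ 2 = n, (k : ℂ) ^ w

lemma squareCpow_sq (w : ℂ) {k : ℕ} (hk : k ≠ 0) : squareCpow w (k ^ 2) = (k : ℂ) ^ w := by
  have : {j ∈ (k ^ 2).divisors | j ^ 2 = k ^ 2} = {k} := by
    ext j
    simp only [Finset.mem_filter, Nat.mem_divisors, Finset.mem_singleton]
    constructor
    · exact fun h => Nat.pow_left_injective two_ne_zero h.2
    · rintro rfl
      exact ⟨⟨dvd_pow_self _ two_ne_zero, pow_ne_zero 2 hk⟩, rfl⟩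
  rw [squareCpow, this, Finset.sum_singleton]

lemma squareCpow_eq_zero {w : ℂ} {n : ℕ} (hn : ∀ k, k ^ 2 ≠ n) : squareCpow w n = 0 :=
  Finset.sum_eq_zero fun k hk => absurd (Finset.mem_filter.1 hk).2 (hn k)

lemma term_squareCpow_sq (w s : ℂ) (k : ℕ) :
    term (squareCpow w) s (k ^ 2) = term 1 (2 * s - w) k := by
  rcases eq_or_ne k 0 with rfl | hk
  · simp
  have hk' : (k : ℂ) ≠ 0 := Nat.cast_ne_zero.2 hk
  rw [term_of_ne_zero (pow_ne_zero 2 hk), term_of_ne_zero hk, squareCpow_sq w hk, Pi.one_apply,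
    sq, Nat.cast_mul, natCast_mul_natCast_cpow, two_mul, cpow_sub _ _ hk', cpow_add _ _ hk']
  field_simp

lemma LSeriesHasSum_squareCpow {w s : ℂ} (hs : 1 < (2 * s - w).re) :
    LSeriesHasSum (squareCpow w) s (riemannZeta (2 * s - w)) := by
  have hsupp : ∀ n ∉ Set.range fun k : ℕ => k ^ 2, term (squareCpow w) s n = 0 := by
    intro n hn
    rcases eq_or_ne n 0 with rfl | hn₀
    · exact term_zero _ _
    rw [term_of_ne_zero hn₀, squareCpow_eq_zero fun k hk => hn ⟨k, hk⟩, zero_div]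
  rw [LSeriesHasSum, ← (Nat.pow_left_injective two_ne_zero).hasSum_iff hsupp]
  simp only [Function.comp_def, term_squareCpow_sq]
  exact LSeriesHasSum_one hs

lemma convolution_squareCpow_apply (w : ℂ) (f : ℕ → ℂ) (N : ℕ) :
    (squareCpow w ⍟ f) N = ∑ d ∈ N.divisors with d ^ 2 ∣ N, (d : ℂ) ^ w * f (N / d ^ 2) := by
  simp only [convolution_def, squareCpow, Finset.sum_mul]
  rw [Finset.sum_comm' (t' := {d ∈ N.divisors | d ^ 2 ∣ N}) (s' := fun d => {(d ^ 2, N / d ^ 2)})]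
  · simp only [Finset.sum_singleton]
  · rintro ⟨m, e⟩ d
    simp only [Nat.mem_divisorsAntidiagonal, Finset.mem_filter, Nat.mem_divisors,
      Finset.mem_singleton, Prod.mk.injEq]
    constructor
    · rintro ⟨⟨rfl, hN⟩, -, rfl⟩
      have hd : 0 < d ^ 2 := Nat.pos_of_ne_zero (left_ne_zero_of_mul hN)
      exact ⟨⟨rfl, (Nat.mul_div_cancel_left e hd).symm⟩,
        ⟨(dvd_pow_self d two_ne_zero).mul_right e, hN⟩, dvd_mul_right _ _⟩
    · rintro ⟨⟨rfl, rfl⟩, ⟨-, hN⟩, hd2⟩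
      refine ⟨⟨Nat.mul_div_cancel' hd2, hN⟩, ⟨dvd_pow_self d two_ne_zero, ?_⟩, rfl⟩
      exact fun h => hN (Nat.eq_zero_of_zero_dvd (h ▸ hd2))

lemma Nat.mem_divisorsAntidiagonal_and_mem_divisors_gcd_iff {N d : ℕ} {p : ℕ × ℕ} :
    p ∈ N.divisorsAntidiagonal ∧ d ∈ (p.1.gcd p.2).divisors ↔
      p ∈ (N / d ^ 2).divisorsAntidiagonal.image (Prod.map (d * ·) (d * ·)) ∧
        d ∈ {d ∈ N.divisors | d ^ 2 ∣ N} := by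
  obtain ⟨m, n⟩ := p
  simp only [Nat.mem_divisorsAntidiagonal, Finset.mem_filter, Nat.mem_divisors, Finset.mem_image,
    Prod.map_apply, Prod.mk.injEq, Prod.exists]
  constructor
  · rintro ⟨⟨rfl, hN⟩, hd, -⟩
    obtain ⟨⟨m', rfl⟩, ⟨n', rfl⟩⟩ := Nat.dvd_gcd_iff.1 hd
    have hmn : d * m' * (d * n') = d ^ 2 * (m' * n') := by ring
    rw [hmn] at hN ⊢
    rw [Nat.mul_div_cancel_left _ (Nat.pos_of_ne_zero (left_ne_zero_of_mul hN))]
    exact ⟨⟨m', n', ⟨rfl, right_ne_zero_of_mul hN⟩, rfl, rfl⟩,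
      ⟨(dvd_pow_self d two_ne_zero).mul_right _, hN⟩, dvd_mul_right _ _⟩
  · rintro ⟨⟨m', n', ⟨hmn, hM⟩, rfl, rfl⟩, ⟨-, hN⟩, hd2⟩
    have hd : d ≠ 0 := by rintro rfl; simp at hM
    refine ⟨⟨by rw [← Nat.mul_div_cancel' hd2, ← hmn]; ring, hN⟩,
      Nat.dvd_gcd (dvd_mul_right d m') (dvd_mul_right d n'), ?_⟩
    exact Nat.gcd_ne_zero_left (mul_ne_zero hd (left_ne_zero_of_mul (hmn ▸ hM)))

def IsHeckeMultiplicative (a : ℕ → ℂ) : Prop :=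
  ∀ m n : ℕ, 1 ≤ m → 1 ≤ n → a m * a n = ∑ d ∈ (Nat.gcd m n).divisors, a (m * n / d ^ 2)

lemma convolution_mul_cpow_apply_of_hecke {a : ℕ → ℂ} (hmult : IsHeckeMultiplicative a)
    (w : ℂ) (N : ℕ) :
    (a ⍟ fun n => a n * (n : ℂ) ^ w) N =
      ∑ d ∈ N.divisors with d ^ 2 ∣ N, (d : ℂ) ^ w * (a (N / d ^ 2) * csigma w (N / d ^ 2)) := by
  calc (a ⍟ fun n => a n * (n : ℂ) ^ w) N
      = ∑ p ∈ N.divisorsAntidiagonal, ∑ d ∈ (p.1.gcd p.2).divisors,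
          a (N / d ^ 2) * (p.2 : ℂ) ^ w := by
        rw [convolution_def]
        refine Finset.sum_congr rfl fun p hp => ?_
        obtain ⟨h1, h2⟩ := Nat.ne_zero_of_mem_divisorsAntidiagonal hp
        rw [← mul_assoc, hmult _ _ (Nat.one_le_iff_ne_zero.2 h1) (Nat.one_le_iff_ne_zero.2 h2),
          (Nat.mem_divisorsAntidiagonal.1 hp).1, Finset.sum_mul]
    _ = ∑ d ∈ N.divisors with d ^ 2 ∣ N,
          ∑ p ∈ (N / d ^ 2).divisorsAntidiagonal.image (Prod.map (d * ·) (d * ·)),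
            a (N / d ^ 2) * (p.2 : ℂ) ^ w :=
        Finset.sum_comm' fun _ _ => Nat.mem_divisorsAntidiagonal_and_mem_divisors_gcd_iff
    _ = _ := by
        refine Finset.sum_congr rfl fun d hd => ?_
        have hd0 : d ≠ 0 := Nat.ne_of_gt (Nat.pos_of_mem_divisors (Finset.mem_filter.1 hd).1)
        rw [Finset.sum_image ((mul_right_injective₀ hd0).prodMap (mul_right_injective₀ hd0)).injOn,
          csigma, ← Nat.sum_divisorsAntidiagonal' fun _ e => (e : ℂ) ^ w, Finset.mul_sum,
          Finset.mul_sum]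
        refine Finset.sum_congr rfl fun q _ => ?_
        rw [Prod.map_snd, Nat.cast_mul, natCast_mul_natCast_cpow]
        ring

lemma convolution_mul_cpow_eq_of_hecke {a : ℕ → ℂ} (hmult : IsHeckeMultiplicative a) (w : ℂ) :
    (a ⍟ fun n => a n * (n : ℂ) ^ w) = squareCpow w ⍟ fun n => a n * csigma w n := by
  ext N
  rw [convolution_mul_cpow_apply_of_hecke hmult, convolution_squareCpow_apply]

theorem hecke_dirichlet_series_factorization_general
    (a : ℕ → ℂ) (A θ : ℝ) (w s : ℂ)
    (hmult : ∀ m n : ℕ, 1 ≤ m → 1 ≤ n →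
      a m * a n = ∑ d ∈ (Nat.gcd m n).divisors, a (m * n / d ^ 2))
    (hθ : 0 ≤ θ)
    (hbound : ∀ n : ℕ, 1 ≤ n → ‖a n‖ ≤ A * (n : ℝ) ^ θ)
    (hs : 1 + θ + max w.re 0 < s.re) :
    Summable (fun n : ℕ => ‖a (n + 1) * ((n + 1 : ℕ) : ℂ) ^ (-s)‖) ∧
    Summable (fun n : ℕ => ‖a (n + 1) * ((n + 1 : ℕ) : ℂ) ^ (-(s - w))‖) ∧
    Summable (fun n : ℕ =>
      ‖a (n + 1) * csigma w (n + 1) * ((n + 1 : ℕ) : ℂ) ^ (-s)‖) ∧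
    riemannZeta (2 * s - w) ≠ 0 ∧
    (∑' n : ℕ, a (n + 1) * csigma w (n + 1) * ((n + 1 : ℕ) : ℂ) ^ (-s)) =
      (∑' n : ℕ, a (n + 1) * ((n + 1 : ℕ) : ℂ) ^ (-s)) *
        (∑' n : ℕ, a (n + 1) * ((n + 1 : ℕ) : ℂ) ^ (-(s - w))) /
        riemannZeta (2 * s - w) := by
  have hw := le_max_left w.re 0
  have h0 := le_max_right w.re 0
  have hb : ∀ n ≠ 0, ‖a n‖ ≤ A * (n : ℝ) ^ θ :=
    fun n hn => hbound n (Nat.one_le_iff_ne_zero.2 hn)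
  have ha {z : ℂ} (hz : 1 + θ < z.re) : LSeriesSummable a z :=
    LSeriesSummable_of_le_const_mul_rpow hz ⟨A, by simpa using hb⟩
  have has := ha (z := s) (by linarith)
  have hasw := ha (z := s - w) (by rw [sub_re]; linarith)
  have hH : LSeriesSummable (fun n => a n * csigma w n) s :=
    .mul_of_norm_le_rpow hb <| LSeriesSummable_csigma (by simp; linarith) (by simp; linarith)
  have hζ : 1 < (2 * s - w).re := by simp; linarith
  have hζ₀ := riemannZeta_ne_zero_of_one_lt_re hζ
  have hZ := LSeriesHasSum_squareCpow hζ
  refine ⟨has.summable_norm_succ, hasw.summable_norm_succ, hH.summable_norm_succ, hζ₀, ?_⟩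
  have key : LSeries (fun n => a n * csigma w n) s * riemannZeta (2 * s - w) =
      LSeries a s * LSeries a (s - w) := by
    rw [← hZ.LSeries_eq, mul_comm, ← LSeries_convolution' hZ.LSeriesSummable hH,
      ← convolution_mul_cpow_eq_of_hecke hmult, LSeries_convolution' has
        (LSeriesSummable_mul_cpow_iff.2 hasw), LSeries_mul_cpow]
  rw [eq_div_iff hζ₀]
  simpa only [LSeries_eq_tsum_succ] using key

theorem hecke_dirichlet_series_factorization
    (a : ℕ → ℂ) (A θ : ℝ) (w s : ℂ)
    (ha1 : a 1 = 1)
    (hmult : ∀ m n : ℕ, 1 ≤ m → 1 ≤ n →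
      a m * a n = ∑ d ∈ (Nat.gcd m n).divisors, a (m * n / d ^ 2))
    (hA : 0 < A) (hθ : 0 ≤ θ)
    (hbound : ∀ n : ℕ, 1 ≤ n → ‖a n‖ ≤ A * (n : ℝ) ^ θ)
    (hs : 1 + θ + max w.re 0 < s.re) :
    Summable (fun n : ℕ => ‖a (n + 1) * ((n + 1 : ℕ) : ℂ) ^ (-s)‖) ∧
    Summable (fun n : ℕ => ‖a (n + 1) * ((n + 1 : ℕ) : ℂ) ^ (-(s - w))‖) ∧
    Summable (fun n : ℕ =>
      ‖a (n + 1) * csigma w (n + 1) * ((n + 1 : ℕ) : ℂ) ^ (-s)‖) ∧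
    riemannZeta (2 * s - w) ≠ 0 ∧
    (∑' n : ℕ, a (n + 1) * csigma w (n + 1) * ((n + 1 : ℕ) : ℂ) ^ (-s)) =
      (∑' n : ℕ, a (n + 1) * ((n + 1 : ℕ) : ℂ) ^ (-s)) *
        (∑' n : ℕ, a (n + 1) * ((n + 1 : ℕ) : ℂ) ^ (-(s - w))) /
        riemannZeta (2 * s - w) :=
  hecke_dirichlet_series_factorization_general a A θ w s hmult hθ hbound hs
end
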